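/- arXiv:2204.06165 — 5 statements merged into one kernel-verified Lean document; each statement's English description precedes it below -/
import Mathlib

section
/- In the normal linear model setup with initial prior π₀(β,σ²) = (σ²)^{−t} exp(−(b + (k/2)(β−μ₀)ᵀR(β−μ₀))/σ²), if δ ∈ (0,1] satisfies δ > (2 − 2t + p)/n₀, then the normalizing constant C(δ) = ∫_{ℝ^p} ∫₀^∞ π₀(β,σ²) L₀(β,σ²)^δ dσ² dβ is finite, i.e., the power prior with power δ is proper. -/
open MeasureTheory Matrix Real Set

/-- A positive definite quadratic form is bounded below by a positive multiple of `‖x‖²`. -/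
private lemma quad_lower_bound {m : ℕ} (hm : 0 < m) (M : Matrix (Fin m) (Fin m) ℝ)
    (hM : M.PosDef) : ∃ c > 0, ∀ x : Fin m → ℝ, c * ‖x‖ ^ 2 ≤ x ⬝ᵥ M.mulVec x := by
  haveI : Nonempty (Fin m) := ⟨⟨0, hm⟩⟩
  have hcont : Continuous fun x : Fin m → ℝ => x ⬝ᵥ M.mulVec x := by
    simp only [dotProduct, Matrix.mulVec]
    exact continuous_finset_sum _ fun i _ =>
      (continuous_apply i).mul (continuous_finset_sum _ fun j _ =>
        continuous_const.mul (continuous_apply j))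
  obtain ⟨z, hzs, hmin⟩ := (isCompact_sphere (0 : Fin m → ℝ) 1).exists_isMinOn
    (NormedSpace.sphere_nonempty.mpr zero_le_one) hcont.continuousOn
  have hz1 : ‖z‖ = 1 := by simpa using hzs
  have hz0 : z ≠ 0 := by
    intro h; rw [h, norm_zero] at hz1; norm_num at hz1
  have hc : 0 < z ⬝ᵥ M.mulVec z := by
    have := hM.dotProduct_mulVec_pos hz0
    simpa using this
  refine ⟨z ⬝ᵥ M.mulVec z, hc, fun x => ?_⟩
  rcases eq_or_ne x 0 with rfl | hx0
  · simp
  · have hr : 0 < ‖x‖ := norm_pos_iff.mpr hx0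
    set y : Fin m → ℝ := ‖x‖⁻¹ • x with hy_def
    have hy1 : ‖y‖ = 1 := by
      rw [hy_def, norm_smul, norm_inv, norm_norm, inv_mul_cancel₀ hr.ne']
    have hys : y ∈ Metric.sphere (0 : Fin m → ℝ) 1 := by
      simpa using hy1
    have hmin' : z ⬝ᵥ M.mulVec z ≤ y ⬝ᵥ M.mulVec y := hmin hys
    have hxy : x = ‖x‖ • y := by
      rw [hy_def, smul_smul, mul_inv_cancel₀ hr.ne', one_smul]
    have hfx : x ⬝ᵥ M.mulVec x = ‖x‖ ^ 2 * (y ⬝ᵥ M.mulVec y) := by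
      conv_lhs => rw [hxy]
      rw [smul_dotProduct, Matrix.mulVec_smul, dotProduct_smul]
      simp [smul_eq_mul]; ring
    rw [hfx]
    calc z ⬝ᵥ M.mulVec z * ‖x‖ ^ 2 ≤ (y ⬝ᵥ M.mulVec y) * ‖x‖ ^ 2 :=
          mul_le_mul_of_nonneg_right hmin' (sq_nonneg _)
      _ = ‖x‖ ^ 2 * (y ⬝ᵥ M.mulVec y) := by ring

/-- The basic integrability: `∫₀^∞ w^(-a) e^{-1/w} dw < ∞` for `a > 1`. -/
private lemma int_base {a : ℝ} (ha : 1 < a) :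
    IntegrableOn (fun w : ℝ => w ^ (-a) * Real.exp (-1 / w)) (Ioi 0) := by
  have hset : Ioc (0:ℝ) 1 ∪ Ioi 1 = Ioi 0 := Ioc_union_Ioi_eq_Ioi zero_le_one
  rw [← hset]
  have hcontOn : ∀ s : Set ℝ, (∀ w ∈ s, (0:ℝ) < w) →
      ContinuousOn (fun w : ℝ => w ^ (-a) * Real.exp (-1 / w)) s := by
    intro s hs
    refine ContinuousOn.mul ?_ ?_
    · exact ContinuousOn.rpow_const continuousOn_id fun w hw => Or.inl (hs w hw).ne'
    · exact (Real.continuous_exp.comp_continuousOn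
        (continuousOn_const.div continuousOn_id fun w hw => (hs w hw).ne'))
  apply IntegrableOn.union
  · -- on (0,1]: bounded by m!
    set m : ℕ := ⌈a⌉₊ with hm_def
    have hma : a ≤ m := Nat.le_ceil a
    refine Integrable.mono' (g := fun _ => (m.factorial : ℝ))
      (integrableOn_const (C := (m.factorial : ℝ)) measure_Ioc_lt_top.ne)
      ((hcontOn _ fun w hw => hw.1).aestronglyMeasurable measurableSet_Ioc) ?_
    filter_upwards [ae_restrict_mem measurableSet_Ioc] with w hw
    obtain ⟨h0, h1⟩ := hw
    have hfnn : 0 ≤ w ^ (-a) * Real.exp (-1 / w) :=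
      mul_nonneg (Real.rpow_nonneg h0.le _) (Real.exp_pos _).le
    rw [Real.norm_eq_abs, abs_of_nonneg hfnn]
    have hw0 : 0 < 1 / w := by positivity
    have hkey : Real.exp (-1 / w) ≤ m.factorial * w ^ (m : ℕ) := by
      have h2 : (1 / w) ^ m / m.factorial ≤ Real.exp (1 / w) := by
        calc (1 / w) ^ m / m.factorial
            ≤ ∑ i ∈ Finset.range (m + 1), (1 / w) ^ i / i.factorial :=
              Finset.single_le_sum (f := fun i => (1 / w) ^ i / (i.factorial : ℝ))
                (fun i _ => by positivity) (Finset.self_mem_range_succ m)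
          _ ≤ Real.exp (1 / w) := Real.sum_le_exp_of_nonneg hw0.le _
      have h3 : 0 < (1 / w) ^ m / (m.factorial : ℝ) := by positivity
      have h4 : Real.exp (-1 / w) = (Real.exp (1 / w))⁻¹ := by
        rw [← Real.exp_neg]; ring_nf
      rw [h4]
      calc (Real.exp (1 / w))⁻¹ ≤ ((1 / w) ^ m / (m.factorial : ℝ))⁻¹ :=
            inv_anti₀ h3 h2
        _ = m.factorial * w ^ (m : ℕ) := by
            field_simp
            rw [← mul_pow, one_div_mul_cancel h0.ne', one_pow]
    calc w ^ (-a) * Real.exp (-1 / w) ≤ w ^ (-a) * (m.factorial * w ^ (m : ℕ)) :=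
          mul_le_mul_of_nonneg_left hkey (Real.rpow_nonneg h0.le _)
      _ = m.factorial * (w ^ (-a) * w ^ ((m : ℕ) : ℝ)) := by
          rw [Real.rpow_natCast]; ring
      _ = m.factorial * w ^ (-a + (m : ℕ)) := by rw [Real.rpow_add h0]
      _ ≤ m.factorial * 1 := by
          refine mul_le_mul_of_nonneg_left ?_ (Nat.cast_nonneg _)
          exact Real.rpow_le_one h0.le h1 (by linarith)
      _ = m.factorial := mul_one _
  · -- on (1,∞): bounded by w^(-a)
    refine Integrable.mono' (integrableOn_Ioi_rpow_of_lt (by linarith : -a < -1) one_pos)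
      ((hcontOn _ fun w hw => lt_trans one_pos hw).aestronglyMeasurable measurableSet_Ioi) ?_
    filter_upwards [ae_restrict_mem measurableSet_Ioi] with w hw
    have h0 : (0:ℝ) < w := lt_trans one_pos hw
    have hfnn : 0 ≤ w ^ (-a) * Real.exp (-1 / w) :=
      mul_nonneg (Real.rpow_nonneg h0.le _) (Real.exp_pos _).le
    rw [Real.norm_eq_abs, abs_of_nonneg hfnn]
    calc w ^ (-a) * Real.exp (-1 / w) ≤ w ^ (-a) * 1 :=
          mul_le_mul_of_nonneg_left
            (Real.exp_le_one_iff.mpr (div_nonpos_of_nonpos_of_nonneg (by norm_num) h0.le)) (Real.rpow_nonneg h0.le _)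
      _ = w ^ (-a) := mul_one _

/-- Scaling: integrability and value of `∫₀^∞ s^(-a) e^{-c/s} ds`. -/
private lemma int_scaled {a c : ℝ} (ha : 1 < a) (hc : 0 < c) :
    IntegrableOn (fun s : ℝ => s ^ (-a) * Real.exp (-c / s)) (Ioi 0) ∧
    ∫ s in Ioi (0:ℝ), s ^ (-a) * Real.exp (-c / s) =
      c ^ (1 - a) * ∫ w in Ioi (0:ℝ), w ^ (-a) * Real.exp (-1 / w) := by
  set g : ℝ → ℝ := fun s => s ^ (-a) * Real.exp (-c / s) with hg_def
  have hEq : EqOn (fun x : ℝ => c ^ (-a) * (x ^ (-a) * Real.exp (-1 / x)))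
      (fun x : ℝ => g (c * x)) (Ioi 0) := by
    intro x hx
    rw [mem_Ioi] at hx
    simp only [hg_def]
    rw [Real.mul_rpow hc.le hx.le]
    have : -c / (c * x) = -1 / x := by
      field_simp
    rw [this]; ring
  have hcomp : IntegrableOn (fun x : ℝ => g (c * x)) (Ioi 0) :=
    IntegrableOn.congr_fun ((int_base ha).const_mul (c ^ (-a))) hEq measurableSet_Ioi
  have hint : IntegrableOn g (Ioi 0) := by
    have := (integrableOn_Ioi_comp_mul_left_iff g 0 hc).mp hcomp
    rwa [mul_zero] at this
  refine ⟨hint, ?_⟩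
  have hsub := integral_comp_mul_left_Ioi g 0 hc
  rw [mul_zero] at hsub
  have hlhs : ∫ x in Ioi (0:ℝ), g (c * x) =
      c ^ (-a) * ∫ w in Ioi (0:ℝ), w ^ (-a) * Real.exp (-1 / w) := by
    rw [← setIntegral_congr_fun measurableSet_Ioi hEq, integral_const_mul]
  rw [hlhs] at hsub
  have hc' : c ≠ 0 := hc.ne'
  have : (1:ℝ) - a = 1 + (-a) := by ring
  rw [this, Real.rpow_add hc, Real.rpow_one]
  rw [smul_eq_mul] at hsub
  field_simp at hsub ⊢
  linarith [hsub]

/-- Normal linear model: with initial prior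
`π₀(β,σ²) = (σ²)^{-t} exp(-(b + (k/2)(β-μ₀)ᵀR(β-μ₀))/σ²)`, if `δ ∈ (0,1]` satisfies
`δ > (2 - 2t + p)/n₀` then the power prior normalizing constant
`C(δ) = ∫∫ π₀ L₀^δ` is finite. -/
theorem power_prior_proper_general
    (p n₀ : ℕ) (hp : 0 < p) (hpn : p < n₀)
    (X₀ : Matrix (Fin n₀) (Fin p) ℝ) (Y₀ : Fin n₀ → ℝ)
    (hX₀ : (X₀ᵀ * X₀).PosDef)
    (betaHat0 : Fin p → ℝ)
    (hbetaHat0 : betaHat0 = (X₀ᵀ * X₀)⁻¹.mulVec (X₀ᵀ.mulVec Y₀))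
    (S₀ : ℝ)
    (hS₀ : S₀ = (Y₀ - X₀.mulVec betaHat0) ⬝ᵥ (Y₀ - X₀.mulVec betaHat0))
    (hS₀pos : 0 < S₀)
    (t b k : ℝ) (ht : 0 ≤ t) (hb : 0 ≤ b) (hk : k = 0 ∨ k = 1)
    (μ₀ : Fin p → ℝ) (R : Matrix (Fin p) (Fin p) ℝ) (hR : R.PosDef)
    (L₀ : (Fin p → ℝ) → ℝ → ℝ)
    (hL₀ : ∀ β s, L₀ β s =
      (2 * Real.pi * s) ^ (-(n₀ : ℝ) / 2) *
        Real.exp (-(S₀ + (β - betaHat0) ⬝ᵥ (X₀ᵀ * X₀).mulVec (β - betaHat0)) / (2 * s)))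
    (π₀ : (Fin p → ℝ) → ℝ → ℝ)
    (hπ₀ : ∀ β s, π₀ β s =
      s ^ (-t) * Real.exp (-(b + k / 2 * ((β - μ₀) ⬝ᵥ R.mulVec (β - μ₀))) / s))
    (δ : ℝ) (hδ : δ ∈ Set.Ioc (0 : ℝ) 1)
    (hδ' : (2 - 2 * t + (p : ℝ)) / (n₀ : ℝ) < δ) :
    ∫⁻ β : Fin p → ℝ, ∫⁻ s in Set.Ioi (0 : ℝ),
      ENNReal.ofReal (π₀ β s * L₀ β s ^ δ) < ⊤ := by
  obtain ⟨hδ0, hδ1⟩ := hδ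
  have hn : (0:ℝ) < (n₀ : ℝ) := by exact_mod_cast hp.trans hpn
  set u : ℝ := δ * (n₀ : ℝ) / 2 with hu_def
  set a : ℝ := t + u with ha_def
  have hδn : 2 - 2 * t + (p : ℝ) < δ * (n₀ : ℝ) := (div_lt_iff₀ hn).mp hδ'
  have hpa : (p : ℝ) < 2 * (a - 1) := by
    simp only [ha_def, hu_def]; linarith
  have hp0 : (0:ℝ) ≤ (p : ℝ) := Nat.cast_nonneg p
  have ha1 : 1 < a := by linarith
  obtain ⟨c₀, hc₀, hQbound⟩ := quad_lower_bound hp _ hX₀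
  obtain ⟨cR, hcR, hRbound⟩ := quad_lower_bound hp _ hR
  set Q : (Fin p → ℝ) → ℝ :=
    fun β => (β - betaHat0) ⬝ᵥ (X₀ᵀ * X₀).mulVec (β - betaHat0) with hQ_def
  have hQnn : ∀ β, 0 ≤ Q β := fun β =>
    le_trans (by positivity) (hQbound (β - betaHat0))
  set c : (Fin p → ℝ) → ℝ := fun β => δ * (S₀ + Q β) / 2 with hc_def
  have hcpos : ∀ β, 0 < c β := fun β =>
    div_pos (mul_pos hδ0 (by linarith [hQnn β])) two_pos
  set K : ℝ := (2 * Real.pi) ^ (-u) with hK_def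
  have hKnn : 0 ≤ K := Real.rpow_nonneg (by positivity) _
  set I : ℝ := ∫ w in Ioi (0:ℝ), w ^ (-a) * Real.exp (-1 / w) with hI_def
  have hInn : 0 ≤ I :=
    setIntegral_nonneg measurableSet_Ioi fun w hw =>
      mul_nonneg (Real.rpow_nonneg (le_of_lt hw) _) (Real.exp_pos _).le
  -- pointwise bound
  have hbound : ∀ β : Fin p → ℝ, ∀ s ∈ Ioi (0:ℝ),
      π₀ β s * L₀ β s ^ δ ≤ K * (s ^ (-a) * Real.exp (-(c β) / s)) := by
    intro β s hs
    rw [mem_Ioi] at hs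
    have h2pis : (0:ℝ) ≤ 2 * Real.pi * s := by positivity
    rw [hπ₀, hL₀]
    have hL : ((2 * Real.pi * s) ^ (-(n₀:ℝ) / 2) *
        Real.exp (-(S₀ + Q β) / (2 * s))) ^ δ
        = K * s ^ (-u) * Real.exp (-(c β) / s) := by
      rw [Real.mul_rpow (Real.rpow_nonneg h2pis _) (Real.exp_pos _).le]
      congr 1
      · rw [← Real.rpow_mul h2pis, show -(n₀:ℝ) / 2 * δ = -u by rw [hu_def]; ring,
          Real.mul_rpow (by positivity) hs.le, hK_def]
      · rw [Real.rpow_def_of_pos (Real.exp_pos _), Real.log_exp]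
        congr 1
        rw [hc_def]
        field_simp
    rw [hL]
    have hE1 : Real.exp (-(b + k / 2 * ((β - μ₀) ⬝ᵥ R.mulVec (β - μ₀))) / s) ≤ 1 := by
      apply Real.exp_le_one_iff.mpr
      have hQR : 0 ≤ (β - μ₀) ⬝ᵥ R.mulVec (β - μ₀) :=
        le_trans (by positivity) (hRbound (β - μ₀))
      have hk2 : 0 ≤ k / 2 := by rcases hk with rfl | rfl <;> norm_num
      have hnum : 0 ≤ b + k / 2 * ((β - μ₀) ⬝ᵥ R.mulVec (β - μ₀)) := by
        have := mul_nonneg hk2 hQR; linarith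
      exact div_nonpos_of_nonpos_of_nonneg (neg_nonpos_of_nonneg hnum) hs.le
    have hst : s ^ (-t) * s ^ (-u) = s ^ (-a) := by
      rw [← Real.rpow_add hs, ha_def]; ring_nf
    calc s ^ (-t) * Real.exp (-(b + k / 2 * ((β - μ₀) ⬝ᵥ R.mulVec (β - μ₀))) / s) *
          (K * s ^ (-u) * Real.exp (-(c β) / s))
        ≤ s ^ (-t) * 1 * (K * s ^ (-u) * Real.exp (-(c β) / s)) := by
          apply mul_le_mul_of_nonneg_right
            (mul_le_mul_of_nonneg_left hE1 (Real.rpow_nonneg hs.le _))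
          exact mul_nonneg (mul_nonneg hKnn (Real.rpow_nonneg hs.le _)) (Real.exp_pos _).le
      _ = K * (s ^ (-t) * s ^ (-u) * Real.exp (-(c β) / s)) := by ring
      _ = K * (s ^ (-a) * Real.exp (-(c β) / s)) := by rw [hst]
  -- inner integral estimate
  have hinner : ∀ β : Fin p → ℝ,
      (∫⁻ s in Ioi (0:ℝ), ENNReal.ofReal (π₀ β s * L₀ β s ^ δ)) ≤
      ENNReal.ofReal (K * I * (c β) ^ (1 - a)) := by
    intro β
    obtain ⟨hint, hval⟩ := int_scaled ha1 (hcpos β)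
    calc (∫⁻ s in Ioi (0:ℝ), ENNReal.ofReal (π₀ β s * L₀ β s ^ δ))
        ≤ ∫⁻ s in Ioi (0:ℝ),
            ENNReal.ofReal (K * (s ^ (-a) * Real.exp (-(c β) / s))) := by
          refine lintegral_mono_ae ?_
          filter_upwards [ae_restrict_mem measurableSet_Ioi] with s hs
          exact ENNReal.ofReal_le_ofReal (hbound β s hs)
      _ = ENNReal.ofReal (∫ s in Ioi (0:ℝ), K * (s ^ (-a) * Real.exp (-(c β) / s))) := by
          refine (ofReal_integral_eq_lintegral_ofReal (hint.const_mul K) ?_).symm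
          filter_upwards [ae_restrict_mem measurableSet_Ioi] with s hs
          rw [mem_Ioi] at hs
          exact mul_nonneg hKnn
            (mul_nonneg (Real.rpow_nonneg hs.le _) (Real.exp_pos _).le)
      _ = ENNReal.ofReal (K * I * (c β) ^ (1 - a)) := by
          rw [integral_const_mul, hval]
          congr 1
          ring
  -- outer integral
  set m : ℝ := δ * min S₀ c₀ / 2 with hm_def
  have hm : 0 < m := div_pos (mul_pos hδ0 (lt_min hS₀pos hc₀)) two_pos
  have hcb : ∀ β : Fin p → ℝ, m * (1 + ‖β - betaHat0‖ ^ 2) ≤ c β := by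
    intro β
    have h2 : min S₀ c₀ ≤ S₀ := min_le_left _ _
    have h3 : min S₀ c₀ * ‖β - betaHat0‖ ^ 2 ≤ c₀ * ‖β - betaHat0‖ ^ 2 :=
      mul_le_mul_of_nonneg_right (min_le_right _ _) (sq_nonneg _)
    have h4 : min S₀ c₀ * (1 + ‖β - betaHat0‖ ^ 2) ≤ S₀ + Q β := by
      have h5 := hQbound (β - betaHat0)
      nlinarith
    rw [hc_def, hm_def]
    calc δ * min S₀ c₀ / 2 * (1 + ‖β - betaHat0‖ ^ 2)
        = δ * (min S₀ c₀ * (1 + ‖β - betaHat0‖ ^ 2)) / 2 := by ring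
      _ ≤ δ * (S₀ + Q β) / 2 := by gcongr
  have hfin : ∫⁻ β : Fin p → ℝ,
      ENNReal.ofReal ((K * I * m ^ (1 - a)) *
        (1 + ‖β - betaHat0‖ ^ 2) ^ (-(2 * (a - 1)) / 2)) < ⊤ := by
    have hr : ((Module.finrank ℝ (Fin p → ℝ)) : ℝ) < 2 * (a - 1) := by
      rw [Module.finrank_fin_fun]; exact hpa
    have hint2 : Integrable
        (fun β : Fin p → ℝ => (1 + ‖β - betaHat0‖ ^ 2) ^ (-(2 * (a - 1)) / 2)) :=
      (integrable_rpow_neg_one_add_norm_sq hr).comp_sub_right betaHat0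
    exact (hint2.const_mul (K * I * m ^ (1 - a))).lintegral_lt_top
  refine lt_of_le_of_lt (lintegral_mono fun β => ?_) hfin
  refine le_trans (hinner β) (ENNReal.ofReal_le_ofReal ?_)
  have h1a : (1:ℝ) - a ≤ 0 := by linarith
  have hpos1 : 0 < m * (1 + ‖β - betaHat0‖ ^ 2) := by positivity
  have hstep : (c β) ^ (1 - a) ≤ m ^ (1 - a) * (1 + ‖β - betaHat0‖ ^ 2) ^ (1 - a) := by
    calc (c β) ^ (1 - a) ≤ (m * (1 + ‖β - betaHat0‖ ^ 2)) ^ (1 - a) :=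
          Real.rpow_le_rpow_of_nonpos hpos1 (hcb β) h1a
      _ = m ^ (1 - a) * (1 + ‖β - betaHat0‖ ^ 2) ^ (1 - a) :=
          Real.mul_rpow hm.le (by positivity)
  have hexp : -(2 * (a - 1)) / 2 = 1 - a := by ring
  rw [hexp]
  calc K * I * (c β) ^ (1 - a)
      ≤ K * I * (m ^ (1 - a) * (1 + ‖β - betaHat0‖ ^ 2) ^ (1 - a)) :=
        mul_le_mul_of_nonneg_left hstep (mul_nonneg hKnn hInn)
    _ = K * I * m ^ (1 - a) * (1 + ‖β - betaHat0‖ ^ 2) ^ (1 - a) := by ring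
end

section
/- In the normal linear model setup with the reference initial prior π₀(β,σ²) = 1/σ² (the case t = 1, k = 0, b = 0), for every δ ∈ (0,1] the normalizing constant C(δ) = ∫_{ℝ^p} ∫₀^∞ (1/σ²) L₀(β,σ²)^δ dσ² dβ is finite if and only if δ > p/n₀. Hence the power prior is proper only for δ ∈ (p/n₀, 1], and the feasible set of the power parameter is incomplete. -/
open MeasureTheory Matrix Real Set
open scoped ENNReal NNReal


lemma inner_gamma {c d : ℝ} (hc : 0 < c) (hd : 0 < d) :
    ∫⁻ s in Ioi (0:ℝ), ENNReal.ofReal (s ^ (-d-1) * Real.exp (-c/s))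
      = ENNReal.ofReal (Real.Gamma d * c ^ (-d)) := by
  set g : ℝ → ℝ := fun u => u ^ (d-1) * Real.exp (-(c*u)) with hg
  have hgint : IntegrableOn g (Ioi 0) := by
    have h0 : IntegrableOn (fun x : ℝ => Real.exp (-x) * x ^ (d-1)) (Ioi 0) :=
      Real.GammaIntegral_convergent hd
    have h1 : IntegrableOn (fun x : ℝ => Real.exp (-(c*x)) * (c*x) ^ (d-1)) (Ioi 0) := by
      have := (integrableOn_Ioi_comp_mul_left_iff
        (fun x : ℝ => Real.exp (-x) * x ^ (d-1)) 0 hc).2 (by simpa using h0)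
      simpa using this
    have h3 : IntegrableOn (fun x : ℝ => (c ^ (d-1))⁻¹ * (Real.exp (-(c*x)) * (c ^ (d-1) * x ^ (d-1)))) (Ioi 0) := IntegrableOn.congr_fun (h1.const_mul _) (fun x hx => by rw [Real.mul_rpow hc.le (le_of_lt (mem_Ioi.mp hx))]) measurableSet_Ioi
    apply h3.congr_fun ?_ measurableSet_Ioi
    intro x hx
    have hcp : (c:ℝ) ^ (d-1) ≠ 0 := (Real.rpow_pos_of_pos hc _).ne'
    simp only [hg]
    field_simp
  have hpt : ∀ x ∈ Ioi (0:ℝ), (|(-1:ℝ)| * x ^ ((-1:ℝ)-1)) • g (x ^ (-1:ℝ))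
      = x ^ (-d-1) * Real.exp (-c/x) := by
    intro x hx
    have hx0 : (0:ℝ) < x := hx
    simp only [abs_neg, abs_one, one_mul, smul_eq_mul, hg, Real.rpow_neg_one x]
    rw [Real.inv_rpow hx0.le, ← Real.rpow_neg hx0.le,
      show (-d-1 : ℝ) = (-1-1) + -(d-1) by ring, Real.rpow_add hx0, div_eq_mul_inv]
    ring
  have hint : IntegrableOn (fun s : ℝ => s ^ (-d-1) * Real.exp (-c/s)) (Ioi 0) := by
    have := (integrableOn_Ioi_comp_rpow_iff g (p := (-1:ℝ)) (by norm_num)).2 hgint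
    exact this.congr_fun hpt measurableSet_Ioi
  have key : ∫ s in Ioi (0:ℝ), s ^ (-d-1) * Real.exp (-c/s) = ∫ u in Ioi (0:ℝ), g u := by
    have := integral_comp_rpow_Ioi g (p := (-1:ℝ)) (by norm_num)
    rw [← this]
    exact (setIntegral_congr_fun measurableSet_Ioi (fun x hx => (hpt x hx).symm))
  have hval : ∫ u in Ioi (0:ℝ), g u = Real.Gamma d * c ^ (-d) := by
    have h := integral_rpow_mul_exp_neg_mul_rpow (p := 1) (q := d-1) (b := c)
      one_pos (by linarith) hc
    have h2 : ∫ u in Ioi (0:ℝ), g u = ∫ x in Ioi (0:ℝ), x ^ (d-1) * Real.exp (-c * x ^ (1:ℝ)) := by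
      apply setIntegral_congr_fun measurableSet_Ioi
      intro x hx
      simp [hg, Real.rpow_one, neg_mul]
    rw [h2, h, show (-(d-1+1)/1 : ℝ) = -d by ring, show ((d-1+1)/1 : ℝ) = d by ring]
    ring
  have hpos : ∀ s ∈ Ioi (0:ℝ), 0 ≤ s ^ (-d-1) * Real.exp (-c/s) := by
    intro s hs
    have : (0:ℝ) < s := hs
    positivity
  rw [← ofReal_integral_eq_lintegral_ofReal hint
    (ae_restrict_of_forall_mem measurableSet_Ioi hpos), key, hval]

lemma infinite_integral_one_add_norm {p : ℕ} (hp : 0 < p) {r : ℝ} (hr : 0 < r)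
    (hrp : r ≤ (p:ℝ)) :
    ∫⁻ v : Fin p → ℝ, ENNReal.ofReal ((1 + ‖v‖) ^ (-r)) = ⊤ := by
  set s : ℕ → Set (Fin p → ℝ) :=
    fun k => Metric.ball (0 : Fin p → ℝ) (2^(k+1)) \ Metric.ball 0 (2^k) with hs
  have hmem : ∀ k x, x ∈ s k → (2:ℝ)^k ≤ ‖x‖ ∧ ‖x‖ < 2^(k+1) := by
    intro k x hx
    obtain ⟨h1, h2⟩ := hx
    rw [Metric.mem_ball, dist_zero_right] at h1 h2
    exact ⟨not_lt.mp h2, h1⟩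
  have hm : ∀ k, MeasurableSet (s k) :=
    fun k => measurableSet_ball.diff measurableSet_ball
  have hd : Pairwise (Function.onFun Disjoint s) := by
    have key : ∀ k l : ℕ, k < l → Disjoint (s k) (s l) := by
      intro k l hkl
      rw [Set.disjoint_left]
      intro x hxk hxl
      have h1 := (hmem k x hxk).2
      have h2 := (hmem l x hxl).1
      have : (2:ℝ)^(k+1) ≤ 2^l := pow_le_pow_right₀ one_le_two hkl
      linarith
    intro k l hkl
    rcases lt_or_gt_of_ne hkl with h | h
    · exact key k l h
    · exact (key l k h).symm
  have hvol : ∀ k : ℕ, volume (s k)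
      = ENNReal.ofReal ((2^(k+2):ℝ)^p - (2^(k+1):ℝ)^p) := by
    intro k
    rw [hs]
    rw [measure_diff (Metric.ball_subset_ball (pow_le_pow_right₀ one_le_two (Nat.le_succ k)))
      measurableSet_ball.nullMeasurableSet measure_ball_lt_top.ne,
      Real.volume_pi_ball _ (by positivity), Real.volume_pi_ball _ (by positivity),
      ← ENNReal.ofReal_sub _ (by positivity)]
    rw [Fintype.card_fin, show (2:ℝ)*2^(k+1) = 2^(k+2) by ring, show (2:ℝ)*2^k = 2^(k+1) by ring]
  have hC0 : ENNReal.ofReal (1 - (1/2:ℝ)^p) ≠ 0 := by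
    have h : (1/2:ℝ)^p < 1 := pow_lt_one₀ (by norm_num) (by norm_num) hp.ne'
    exact (ENNReal.ofReal_pos.mpr (by linarith)).ne'
  have hann : ∀ k : ℕ, ENNReal.ofReal (1 - (1/2:ℝ)^p)
      ≤ ∫⁻ v in s k, ENNReal.ofReal ((1 + ‖v‖) ^ (-r)) := by
    intro k
    set u : ℝ := 2^(k+2) with hu
    have hu0 : (0:ℝ) < u := by positivity
    have hu1 : (1:ℝ) ≤ u := one_le_pow₀ one_le_two
    have h1 : ENNReal.ofReal (1 - (1/2:ℝ)^p) ≤ ENNReal.ofReal (u ^ (-r)) * volume (s k) := by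
      rw [hvol k, show ((2:ℝ)^(k+1)) = u/2 by rw [hu]; ring,
        ← ENNReal.ofReal_mul (by positivity)]
      apply ENNReal.ofReal_le_ofReal
      have e1 : u^p - (u/2)^p = u^p * (1 - (1/2:ℝ)^p) := by
        rw [show u/2 = u*(1/2) by ring, mul_pow]; ring
      rw [e1, ← mul_assoc, ← Real.rpow_natCast u p, ← Real.rpow_add hu0]
      have e2 : (1:ℝ) ≤ u ^ (-r + (p:ℝ)) := by
        rw [← Real.rpow_zero u]
        exact Real.rpow_le_rpow_of_exponent_le hu1 (by linarith)
      nlinarith [pow_lt_one₀ (by norm_num : (0:ℝ) ≤ 1/2) (by norm_num : (1/2:ℝ) < 1) hp.ne']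
    refine h1.trans ?_
    rw [← setLIntegral_const (s k) _]
    apply setLIntegral_mono' (hm k)
    intro x hx
    apply ENNReal.ofReal_le_ofReal
    apply Real.rpow_le_rpow_of_nonpos (by positivity) ?_ (neg_nonpos.mpr hr.le)
    have h2 := (hmem k x hx).2
    have h3 : (1:ℝ) ≤ 2^(k+1) := one_le_pow₀ one_le_two
    calc 1 + ‖x‖ ≤ 2^(k+1) + 2^(k+1) := by linarith
      _ = u := by rw [hu]; ring
  have htop : (⊤:ℝ≥0∞) ≤ ∫⁻ v : Fin p → ℝ, ENNReal.ofReal ((1 + ‖v‖) ^ (-r)) := by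
    calc (⊤:ℝ≥0∞) = ∑' _ : ℕ, ENNReal.ofReal (1 - (1/2:ℝ)^p) :=
          (ENNReal.tsum_const_eq_top_of_ne_zero hC0).symm
      _ ≤ ∑' k : ℕ, ∫⁻ v in s k, ENNReal.ofReal ((1 + ‖v‖) ^ (-r)) :=
          ENNReal.tsum_le_tsum hann
      _ = ∫⁻ v in ⋃ k, s k, ENNReal.ofReal ((1 + ‖v‖) ^ (-r)) :=
          (lintegral_iUnion hm hd _).symm
      _ ≤ _ := setLIntegral_le_lintegral _ _
  exact top_unique htop

lemma quad_bounds {p : ℕ} (hp : 0 < p) (A : Matrix (Fin p) (Fin p) ℝ) (hA : A.PosDef) :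
    ∃ c₁ c₂ : ℝ, 0 < c₁ ∧ 0 < c₂ ∧
      ∀ v : Fin p → ℝ, c₁ * ‖v‖^2 ≤ v ⬝ᵥ A.mulVec v ∧ v ⬝ᵥ A.mulVec v ≤ c₂ * ‖v‖^2 := by
  haveI : Nonempty (Fin p) := Fin.pos_iff_nonempty.mp hp
  set f : (Fin p → ℝ) → ℝ := fun v => v ⬝ᵥ A.mulVec v with hf
  have hfc : Continuous f := by
    have : f = fun v => ∑ i, v i * ∑ j, A i j * v j := by
      funext v; simp [hf, dotProduct, Matrix.mulVec]
    rw [this]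
    exact continuous_finset_sum _ fun i _ => (continuous_apply i).mul
      (continuous_finset_sum _ fun j _ => continuous_const.mul (continuous_apply j))
  have hpos : ∀ v : Fin p → ℝ, v ≠ 0 → 0 < f v := by
    intro v hv
    have := hA.dotProduct_mulVec_pos hv
    simpa [hf] using this
  set K := Metric.sphere (0 : Fin p → ℝ) 1 with hK
  have hKc : IsCompact K := isCompact_sphere _ _
  have hKne : K.Nonempty := NormedSpace.sphere_nonempty.mpr zero_le_one
  obtain ⟨u₁, hu₁K, hmin⟩ := hKc.exists_isMinOn hKne hfc.continuousOn
  obtain ⟨u₂, hu₂K, hmax⟩ := hKc.exists_isMaxOn hKne hfc.continuousOn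
  have hu₁ : u₁ ≠ 0 := by
    intro h
    have := mem_sphere_zero_iff_norm.mp hu₁K
    rw [h] at this; simp at this
  refine ⟨f u₁, f u₂, hpos u₁ hu₁, lt_of_lt_of_le (hpos u₁ hu₁) (hmin hu₂K), ?_⟩
  intro v
  rcases eq_or_ne v 0 with rfl | hv
  · simp [hf]
  · have hnv : (0:ℝ) < ‖v‖ := norm_pos_iff.mpr hv
    set u : Fin p → ℝ := ‖v‖⁻¹ • v with hu
    have huK : u ∈ K := by
      rw [hK, mem_sphere_zero_iff_norm, hu, norm_smul]
      simp [abs_of_pos (inv_pos.mpr hnv), inv_mul_cancel₀ hnv.ne']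
    have hveq : v = ‖v‖ • u := by
      rw [hu, smul_smul, mul_inv_cancel₀ hnv.ne', one_smul]
    have hscale : f v = ‖v‖^2 * f u := by
      rw [hf]
      conv_lhs => rw [hveq]
      simp only [Matrix.mulVec_smul, smul_dotProduct, dotProduct_smul, smul_eq_mul]
      ring
    have hgoal : v ⬝ᵥ A.mulVec v = f v := rfl
    constructor
    · rw [hgoal, hscale]
      have h2 : f u₁ ≤ f u := hmin huK
      nlinarith [sq_nonneg ‖v‖, h2]
    · rw [hgoal, hscale]
      have h2 : f u ≤ f u₂ := hmax huK
      nlinarith [sq_nonneg ‖v‖, h2]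

lemma outer_iff {p : ℕ} (hp : 0 < p) {S d : ℝ} (hS : 0 < S) (hd : 0 < d)
    (f : (Fin p → ℝ) → ℝ) {c₁ c₂ : ℝ} (hc₁ : 0 < c₁)
    (hlow : ∀ v, c₁ * ‖v‖^2 ≤ f v) (hup : ∀ v, f v ≤ c₂ * ‖v‖^2) :
    (∫⁻ v : Fin p → ℝ, ENNReal.ofReal ((S + f v) ^ (-d))) < ⊤ ↔ (p:ℝ) < 2*d := by
  haveI : Nonempty (Fin p) := Fin.pos_iff_nonempty.mp hp
  have hfnn : ∀ v, 0 ≤ f v := fun v =>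
    le_trans (by positivity) (hlow v)
  have hc₂ : 0 < c₂ := by
    obtain ⟨v, hv⟩ : ∃ v : Fin p → ℝ, v ≠ 0 := exists_ne 0
    have h1 := (hlow v).trans (hup v)
    have h2 : 0 < ‖v‖ := norm_pos_iff.mpr hv
    nlinarith [mul_pos hc₁ (pow_pos h2 2)]
  constructor
  · -- contrapositive: 2d ≤ p → integral = ⊤
    intro hfin
    by_contra hle
    push_neg at hle
    set M : ℝ := max S c₂ with hM
    have hM0 : 0 < M := lt_max_of_lt_left hS
    have hbd : ∀ v : Fin p → ℝ, M ^ (-d) * (1 + ‖v‖) ^ (-(2*d)) ≤ (S + f v) ^ (-d) := by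
      intro v
      have hn : (0:ℝ) ≤ ‖v‖ := norm_nonneg v
      have h1 : S + f v ≤ M * (1 + ‖v‖)^2 := by
        have := hup v
        have h2 : S ≤ M := le_max_left _ _
        have h3 : c₂ ≤ M := le_max_right _ _
        nlinarith
      have h2 : (S + f v) ^ (-d) ≥ (M * (1 + ‖v‖)^2) ^ (-d) :=
        Real.rpow_le_rpow_of_nonpos (add_pos_of_pos_of_nonneg hS (hfnn v)) h1 (neg_nonpos.mpr hd.le)
      calc M ^ (-d) * (1 + ‖v‖) ^ (-(2*d))
          = (M * (1 + ‖v‖)^2) ^ (-d) := by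
            rw [Real.mul_rpow hM0.le (by positivity), ← Real.rpow_natCast (1 + ‖v‖) 2,
              ← Real.rpow_mul (by positivity), Nat.cast_ofNat,
              show (2:ℝ) * -d = -(2*d) by ring]
        _ ≤ (S + f v) ^ (-d) := h2
    have htop : (⊤:ℝ≥0∞) ≤ ∫⁻ v : Fin p → ℝ, ENNReal.ofReal ((S + f v) ^ (-d)) := by
      calc (⊤:ℝ≥0∞) = ENNReal.ofReal (M ^ (-d)) *
            ∫⁻ v : Fin p → ℝ, ENNReal.ofReal ((1 + ‖v‖) ^ (-(2*d))) := by
            rw [infinite_integral_one_add_norm hp (by linarith) (by linarith),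
              ENNReal.mul_top (ENNReal.ofReal_pos.mpr (Real.rpow_pos_of_pos hM0 _)).ne']
        _ = ∫⁻ v : Fin p → ℝ, ENNReal.ofReal (M ^ (-d)) *
              ENNReal.ofReal ((1 + ‖v‖) ^ (-(2*d))) :=
            (lintegral_const_mul' _ _ ENNReal.ofReal_ne_top).symm
        _ ≤ ∫⁻ v : Fin p → ℝ, ENNReal.ofReal ((S + f v) ^ (-d)) := by
            apply lintegral_mono
            intro v
            dsimp only
            rw [← ENNReal.ofReal_mul (Real.rpow_nonneg hM0.le _)]
            exact ENNReal.ofReal_le_ofReal (hbd v)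
    exact absurd hfin (by simp [top_unique htop])
  · intro hpd
    set m : ℝ := min S c₁ with hm
    have hm0 : 0 < m := lt_min hS hc₁
    have hbd : ∀ v : Fin p → ℝ, (S + f v) ^ (-d) ≤ (m/2) ^ (-d) * (1 + ‖v‖) ^ (-(2*d)) := by
      intro v
      have hn : (0:ℝ) ≤ ‖v‖ := norm_nonneg v
      have h1 : m/2 * (1 + ‖v‖)^2 ≤ S + f v := by
        have := hlow v
        have h2 : m ≤ S := min_le_left _ _
        have h3 : m ≤ c₁ := min_le_right _ _
        nlinarith [sq_nonneg (1 - ‖v‖), mul_nonneg (sub_nonneg.mpr h3) (sq_nonneg ‖v‖)]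
      have h2 : (S + f v) ^ (-d) ≤ (m/2 * (1 + ‖v‖)^2) ^ (-d) :=
        Real.rpow_le_rpow_of_nonpos (mul_pos (by linarith : (0:ℝ) < m/2) (by positivity)) h1 (neg_nonpos.mpr hd.le)
      calc (S + f v) ^ (-d) ≤ (m/2 * (1 + ‖v‖)^2) ^ (-d) := h2
        _ = (m/2) ^ (-d) * (1 + ‖v‖) ^ (-(2*d)) := by
            rw [Real.mul_rpow (by positivity) (by positivity),
              ← Real.rpow_natCast (1 + ‖v‖) 2, ← Real.rpow_mul (by positivity), Nat.cast_ofNat,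
              show (2:ℝ) * -d = -(2*d) by ring]
    calc ∫⁻ v : Fin p → ℝ, ENNReal.ofReal ((S + f v) ^ (-d))
        ≤ ∫⁻ v : Fin p → ℝ, ENNReal.ofReal ((m/2) ^ (-d)) *
            ENNReal.ofReal ((1 + ‖v‖) ^ (-(2*d))) := by
          apply lintegral_mono
          intro v
          dsimp only
          rw [← ENNReal.ofReal_mul (Real.rpow_nonneg (by positivity) _)]
          exact ENNReal.ofReal_le_ofReal (hbd v)
      _ = ENNReal.ofReal ((m/2) ^ (-d)) *
            ∫⁻ v : Fin p → ℝ, ENNReal.ofReal ((1 + ‖v‖) ^ (-(2*d))) :=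
          lintegral_const_mul' _ _ ENNReal.ofReal_ne_top
      _ < ⊤ := by
          apply ENNReal.mul_lt_top ENNReal.ofReal_lt_top
          have hrank : (Module.finrank ℝ (Fin p → ℝ) : ℝ) < 2*d := by
            rw [Module.finrank_fin_fun]; exact hpd
          exact finite_integral_one_add_norm hrank


/-- Normal linear model with the reference initial prior `π₀(β,σ²) = 1/σ²`: for every
`δ ∈ (0,1]`, the normalizing constant `C(δ) = ∫∫ (1/σ²) L₀^δ` is finite iff `δ > p/n₀`.
Hence the feasible set of the power parameter is incomplete: `A = (p/n₀, 1]`. -/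
theorem reference_prior_power_prior_proper_iff
    (p n₀ : ℕ) (hp : 0 < p) (hpn : p < n₀)
    (X₀ : Matrix (Fin n₀) (Fin p) ℝ) (Y₀ : Fin n₀ → ℝ)
    (hX₀ : (X₀ᵀ * X₀).PosDef)
    (betaHat0 : Fin p → ℝ)
    (hbetaHat0 : betaHat0 = (X₀ᵀ * X₀)⁻¹.mulVec (X₀ᵀ.mulVec Y₀))
    (S₀ : ℝ)
    (hS₀ : S₀ = (Y₀ - X₀.mulVec betaHat0) ⬝ᵥ (Y₀ - X₀.mulVec betaHat0))
    (hS₀pos : 0 < S₀)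
    (L₀ : (Fin p → ℝ) → ℝ → ℝ)
    (hL₀ : ∀ β s, L₀ β s =
      (2 * Real.pi * s) ^ (-(n₀ : ℝ) / 2) *
        Real.exp (-(S₀ + (β - betaHat0) ⬝ᵥ (X₀ᵀ * X₀).mulVec (β - betaHat0)) / (2 * s))) :
    ∀ δ ∈ Set.Ioc (0 : ℝ) 1,
      ((∫⁻ β : Fin p → ℝ, ∫⁻ s in Set.Ioi (0 : ℝ),
        ENNReal.ofReal (s⁻¹ * L₀ β s ^ δ)) < ⊤ ↔ (p : ℝ) / (n₀ : ℝ) < δ) := by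
  intro δ hδ
  obtain ⟨hδ0, hδ1⟩ := hδ
  have hn₀ : (0:ℝ) < n₀ := Nat.cast_pos.mpr (lt_trans hp hpn)
  set q : (Fin p → ℝ) → ℝ := fun v => v ⬝ᵥ (X₀ᵀ * X₀).mulVec v with hq
  obtain ⟨c₁, c₂, hc₁, hc₂, hbounds⟩ := quad_bounds hp _ hX₀
  have hqnn : ∀ v, 0 ≤ q v := fun v =>
    le_trans (by positivity) (hbounds v).1
  set d : ℝ := δ * n₀ / 2 with hdd
  have hd : 0 < d := by positivity
  -- inner integral
  have hinner : ∀ β : Fin p → ℝ,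
      (∫⁻ s in Ioi (0:ℝ), ENNReal.ofReal (s⁻¹ * L₀ β s ^ δ))
        = ENNReal.ofReal ((2*Real.pi) ^ (-d) * (Real.Gamma d * (δ/2) ^ (-d)))
          * ENNReal.ofReal ((S₀ + q (β - betaHat0)) ^ (-d)) := by
    intro β
    set Qβ : ℝ := q (β - betaHat0) with hQ
    have hQnn : 0 ≤ Qβ := hqnn _
    set c : ℝ := δ * (S₀ + Qβ) / 2 with hcc
    have hc : 0 < c := by positivity
    have step1 : ∀ s ∈ Ioi (0:ℝ), s⁻¹ * L₀ β s ^ δ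
        = (2*Real.pi) ^ (-d) * (s ^ (-d-1) * Real.exp (-c/s)) := by
      intro s hs
      have hs0 : (0:ℝ) < s := hs
      rw [hL₀]
      rw [Real.mul_rpow (Real.rpow_nonneg (by positivity) _) (Real.exp_nonneg _),
        ← Real.rpow_mul (by positivity : (0:ℝ) ≤ 2*Real.pi*s), ← Real.exp_mul,
        show (-(n₀:ℝ)/2)*δ = -d by rw [hdd]; ring,
        show (-(S₀ + Qβ)/(2*s))*δ = -c/s by rw [hcc]; field_simp,
        Real.mul_rpow (by positivity : (0:ℝ) ≤ 2*Real.pi) hs0.le,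
        show (-d-1:ℝ) = -1 + -d by ring, Real.rpow_add hs0, Real.rpow_neg_one]
      ring
    rw [setLIntegral_congr_fun measurableSet_Ioi
      (fun s hs => by rw [step1 s hs])]
    have step2 : ∀ s ∈ Ioi (0:ℝ),
        ENNReal.ofReal ((2*Real.pi) ^ (-d) * (s ^ (-d-1) * Real.exp (-c/s)))
        = ENNReal.ofReal ((2*Real.pi) ^ (-d))
          * ENNReal.ofReal (s ^ (-d-1) * Real.exp (-c/s)) := by
      intro s hs
      exact ENNReal.ofReal_mul (Real.rpow_nonneg (by positivity) _)
    rw [setLIntegral_congr_fun measurableSet_Ioi step2,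
      lintegral_const_mul' _ _ ENNReal.ofReal_ne_top, inner_gamma hc hd]
    have hΓ := Real.Gamma_pos_of_pos hd
    have hcr : c ^ (-d) = (δ/2) ^ (-d) * (S₀ + Qβ) ^ (-d) := by
      rw [show c = (δ/2) * (S₀ + Qβ) from by rw [hcc]; ring,
        Real.mul_rpow (by positivity) (by positivity)]
    rw [← ENNReal.ofReal_mul (Real.rpow_nonneg (by positivity) _),
      ← ENNReal.ofReal_mul (mul_nonneg (Real.rpow_nonneg (by positivity) _)
        (mul_nonneg hΓ.le (Real.rpow_nonneg (by positivity) _)))]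
    congr 1
    rw [hcr]
    ring
  simp_rw [hinner]
  rw [lintegral_const_mul' _ _ ENNReal.ofReal_ne_top]
  have hκ : (0:ℝ) < (2*Real.pi) ^ (-d) * (Real.Gamma d * (δ/2) ^ (-d)) := by
    have := Real.Gamma_pos_of_pos hd
    positivity
  have htrans : (∫⁻ β : Fin p → ℝ, ENNReal.ofReal ((S₀ + q (β - betaHat0)) ^ (-d)))
      = ∫⁻ v : Fin p → ℝ, ENNReal.ofReal ((S₀ + q v) ^ (-d)) :=
    lintegral_sub_right_eq_self (fun v => ENNReal.ofReal ((S₀ + q v) ^ (-d))) betaHat0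
  rw [htrans]
  have houter := outer_iff hp hS₀pos hd q hc₁ (fun v => (hbounds v).1) (fun v => (hbounds v).2)
  constructor
  · intro h
    have hlt : (∫⁻ v : Fin p → ℝ, ENNReal.ofReal ((S₀ + q v) ^ (-d))) < ⊤ := by
      by_contra htop
      push_neg at htop
      rw [top_unique htop, ENNReal.mul_top
        (ENNReal.ofReal_pos.mpr hκ).ne'] at h
      exact absurd h (by simp)
    have := houter.mp hlt
    rw [div_lt_iff₀ hn₀]
    rw [hdd] at this
    linarith
  · intro h
    have hpd : (p:ℝ) < 2*d := by
      rw [hdd]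
      rw [div_lt_iff₀ hn₀] at h
      linarith
    exact ENNReal.mul_lt_top ENNReal.ofReal_lt_top (houter.mpr hpd)
end

section
/- In the normal linear model setup with initial prior π₀(β,σ²) = (σ²)^{−t} exp(−(b + (k/2)(β−μ₀)ᵀR(β−μ₀))/σ²), if t ≥ 1 + p/2 then for every δ ∈ (0,1] the normalizing constant C(δ) = ∫_{ℝ^p} ∫₀^∞ π₀(β,σ²) L₀(β,σ²)^δ dσ² dβ is finite; in particular the power prior is proper on all of (0,1] for Zellner's g-prior (t = 1 + p/2, b = 0, k = 1, R = g⁻¹XᵀX) and for the proper conjugate normal-inverse-gamma prior (t > 1 + p/2, b > 0, k = 1). -/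
open MeasureTheory Matrix Real
open scoped ENNReal

private lemma exp_neg_le_rpow {q x : ℝ} (hq : 0 < q) (hx : 0 < x) :
    Real.exp (-x) ≤ q ^ q * Real.exp (-q) * x ^ (-q) := by
  rw [Real.rpow_def_of_pos hq, Real.rpow_def_of_pos hx, ← Real.exp_add, ← Real.exp_add,
    Real.exp_le_exp]
  have h := Real.log_le_sub_one_of_pos (div_pos hx hq)
  rw [Real.log_div hx.ne' hq.ne'] at h
  have h2 : q * (Real.log x - Real.log q) ≤ q * (x / q - 1) :=
    mul_le_mul_of_nonneg_left h hq.le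
  have h3 : q * (x / q - 1) = x - q := by field_simp
  nlinarith

private lemma quad_form_continuous {p : ℕ} (M : Matrix (Fin p) (Fin p) ℝ) :
    Continuous fun x : Fin p → ℝ => x ⬝ᵥ M.mulVec x := by
  simp only [dotProduct, Matrix.mulVec]
  fun_prop

private lemma quad_form_lower {p : ℕ} (hp : 0 < p) {M : Matrix (Fin p) (Fin p) ℝ}
    (hM : M.PosDef) : ∃ c > 0, ∀ x : Fin p → ℝ, c * ‖x‖ ^ 2 ≤ x ⬝ᵥ M.mulVec x := by
  have hcont : Continuous fun x : Fin p → ℝ => x ⬝ᵥ M.mulVec x := quad_form_continuous M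
  haveI : Nonempty (Fin p) := ⟨⟨0, hp⟩⟩
  have hcompact : IsCompact (Metric.sphere (0 : Fin p → ℝ) 1) := isCompact_sphere _ _
  have hne : (Metric.sphere (0 : Fin p → ℝ) 1).Nonempty := by
    rw [NormedSpace.sphere_nonempty]; norm_num
  obtain ⟨x₀, hx₀, hmin⟩ := hcompact.exists_isMinOn hne hcont.continuousOn
  have hx₀norm : ‖x₀‖ = 1 := by simpa using hx₀
  have hx₀ne : x₀ ≠ 0 := by
    intro h; rw [h] at hx₀norm; simp at hx₀norm
  have hc : 0 < x₀ ⬝ᵥ M.mulVec x₀ := by simpa using hM.dotProduct_mulVec_pos hx₀ne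
  refine ⟨x₀ ⬝ᵥ M.mulVec x₀, hc, fun x => ?_⟩
  rcases eq_or_ne x 0 with rfl | hx
  · simp
  · have hxn : (0:ℝ) < ‖x‖ := norm_pos_iff.mpr hx
    set y := ‖x‖⁻¹ • x with hy
    have hyn : ‖y‖ = 1 := by
      rw [hy, norm_smul, norm_inv, norm_norm, inv_mul_cancel₀ hxn.ne']
    have hmem : y ∈ Metric.sphere (0 : Fin p → ℝ) 1 := by simpa using hyn
    have h1 : x₀ ⬝ᵥ M.mulVec x₀ ≤ y ⬝ᵥ M.mulVec y := hmin hmem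
    have h2 : y ⬝ᵥ M.mulVec y = ‖x‖⁻¹ ^ 2 * (x ⬝ᵥ M.mulVec x) := by
      rw [hy, Matrix.mulVec_smul, smul_dotProduct, dotProduct_smul]
      simp only [smul_eq_mul]; ring
    rw [h2] at h1
    have h4 : ‖x‖ ^ 2 * (‖x‖⁻¹ ^ 2 * (x ⬝ᵥ M.mulVec x)) = x ⬝ᵥ M.mulVec x := by
      field_simp
    nlinarith [mul_le_mul_of_nonneg_left h1 (le_of_lt (pow_pos hxn 2))]

private lemma lintegral_rpow_neg_finite {p : ℕ} (G : (Fin p → ℝ) → ℝ)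
    (hG : Continuous G) (v : Fin p → ℝ) (ε q : ℝ) (hε : 0 < ε) (hq : (p : ℝ) < 2 * q)
    (hlow : ∀ β, ε * (1 + ‖β - v‖) ^ (2:ℝ) ≤ G β) :
    ∫⁻ β, ENNReal.ofReal (G β ^ (-q)) < ⊤ := by
  have hGpos : ∀ β, 0 < G β := fun β =>
    lt_of_lt_of_le (mul_pos hε (Real.rpow_pos_of_pos (by positivity) _)) (hlow β)
  have hint : Integrable (fun β : Fin p → ℝ => G β ^ (-q)) := by
    have hbase : Integrable (fun β : Fin p → ℝ => (1 + ‖β‖) ^ (-(2*q))) := by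
      apply integrable_one_add_norm
      simpa [Module.finrank_fin_fun] using hq
    have hshift : Integrable (fun β : Fin p → ℝ => (1 + ‖β - v‖) ^ (-(2*q))) :=
      hbase.comp_sub_right v
    refine (hshift.const_mul (ε ^ (-q))).mono' ?_ ?_
    · exact (hG.rpow_const (fun β => Or.inl (hGpos β).ne')).aestronglyMeasurable
    · filter_upwards with β
      rw [Real.norm_eq_abs, abs_of_pos (Real.rpow_pos_of_pos (hGpos β) _)]
      have h1 : (0:ℝ) ≤ 1 + ‖β - v‖ := by positivity
      have hq0 : (0:ℝ) < q := by have := Nat.cast_nonneg (α := ℝ) p; linarith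
      calc G β ^ (-q) ≤ (ε * (1 + ‖β - v‖) ^ (2:ℝ)) ^ (-q) :=
            Real.rpow_le_rpow_of_nonpos
              (mul_pos hε (Real.rpow_pos_of_pos (by positivity) _)) (hlow β) (by linarith)
        _ = ε ^ (-q) * (1 + ‖β - v‖) ^ (-(2*q)) := by
            rw [Real.mul_rpow hε.le (by positivity), ← Real.rpow_mul h1]
            norm_num
  exact hint.lintegral_lt_top

set_option maxHeartbeats 1000000 in
/-- Normal linear model: if the initial prior
`π₀(β,σ²) = (σ²)^{-t} exp(-(b + (k/2)(β-μ₀)ᵀR(β-μ₀))/σ²)` has `t ≥ 1 + p/2`, then for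
every `δ ∈ (0,1]` the normalizing constant `C(δ) = ∫∫ π₀ L₀^δ` is finite, so the power
prior is proper on all of `(0,1]` (covering Zellner's g-prior and the proper conjugate
normal-inverse-gamma prior). -/
theorem power_prior_proper_of_t_ge
    (p n₀ : ℕ) (hp : 0 < p) (hpn : p < n₀)
    (X₀ : Matrix (Fin n₀) (Fin p) ℝ) (Y₀ : Fin n₀ → ℝ)
    (hX₀ : (X₀ᵀ * X₀).PosDef)
    (betaHat0 : Fin p → ℝ)
    (hbetaHat0 : betaHat0 = (X₀ᵀ * X₀)⁻¹.mulVec (X₀ᵀ.mulVec Y₀))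
    (S₀ : ℝ)
    (hS₀ : S₀ = (Y₀ - X₀.mulVec betaHat0) ⬝ᵥ (Y₀ - X₀.mulVec betaHat0))
    (hS₀pos : 0 < S₀)
    (t b k : ℝ) (ht : 0 ≤ t) (hb : 0 ≤ b) (hk : k = 0 ∨ k = 1)
    (μ₀ : Fin p → ℝ) (R : Matrix (Fin p) (Fin p) ℝ) (hR : R.PosDef)
    (L₀ : (Fin p → ℝ) → ℝ → ℝ)
    (hL₀ : ∀ β s, L₀ β s =
      (2 * Real.pi * s) ^ (-(n₀ : ℝ) / 2) *
        Real.exp (-(S₀ + (β - betaHat0) ⬝ᵥ (X₀ᵀ * X₀).mulVec (β - betaHat0)) / (2 * s)))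
    (π₀ : (Fin p → ℝ) → ℝ → ℝ)
    (hπ₀ : ∀ β s, π₀ β s =
      s ^ (-t) * Real.exp (-(b + k / 2 * ((β - μ₀) ⬝ᵥ R.mulVec (β - μ₀))) / s))
    (htge : 1 + (p : ℝ) / 2 ≤ t) :
    ∀ δ ∈ Set.Ioc (0 : ℝ) 1,
      ∫⁻ β : Fin p → ℝ, ∫⁻ s in Set.Ioi (0 : ℝ),
        ENNReal.ofReal (π₀ β s * L₀ β s ^ δ) < ⊤ := by
  intro δ hδ
  obtain ⟨hδ0, hδ1⟩ := hδ
  set M : Matrix (Fin p) (Fin p) ℝ := X₀ᵀ * X₀ with hMdef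
  obtain ⟨c₀, hc₀, hquad⟩ := quad_form_lower hp hX₀
  set Q : (Fin p → ℝ) → ℝ := fun β => (β - betaHat0) ⬝ᵥ M.mulVec (β - betaHat0) with hQdef
  have hQ0 : ∀ β, 0 ≤ Q β := fun β =>
    le_trans (by positivity) (hquad (β - betaHat0))
  have hQcont : Continuous Q := by
    rw [hQdef]
    exact (quad_form_continuous M).comp (continuous_id.sub continuous_const)
  have hn₀pos : (0:ℝ) < (n₀:ℝ) := by exact_mod_cast lt_trans hp hpn
  have hp0 : (0:ℝ) ≤ (p:ℝ) := Nat.cast_nonneg p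
  set a : ℝ := t + (n₀:ℝ) * δ / 2 with ha
  have hp2a : (p:ℝ)/2 < a - 1 := by
    have h1 : (0:ℝ) < (n₀:ℝ) * δ / 2 := by positivity
    rw [ha]; linarith
  set r : ℝ := ((p:ℝ)/2 + (a-1))/2 with hrdef
  have hr1 : (p:ℝ)/2 < r := by rw [hrdef]; linarith
  have hr2 : r < a - 1 := by rw [hrdef]; linarith
  have hr0 : 0 < r := by linarith
  have ha0 : 0 < a := by linarith
  set c : (Fin p → ℝ) → ℝ := fun β => δ * (S₀ + Q β) / 2 with hcdef
  have hcpos : ∀ β, 0 < c β := fun β => by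
    simp only [hcdef]
    have := hQ0 β
    have h1 : 0 < S₀ + Q β := by linarith
    positivity
  have hccont : Continuous c := by
    rw [hcdef]
    exact (continuous_const.mul (continuous_const.add hQcont)).div_const 2
  set w : ℝ := -(n₀:ℝ)/2 * δ with hw
  set P : ℝ := (2*π) ^ w with hP
  have hPpos : 0 < P := Real.rpow_pos_of_pos (by positivity) _
  set Ka : ℝ := a ^ a * Real.exp (-a) with hKa
  set Kr : ℝ := r ^ r * Real.exp (-r) with hKr
  have hKa0 : 0 < Ka := by
    rw [hKa]; exact mul_pos (Real.rpow_pos_of_pos ha0 _) (Real.exp_pos _)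
  have hKr0 : 0 < Kr := by
    rw [hKr]; exact mul_pos (Real.rpow_pos_of_pos hr0 _) (Real.exp_pos _)
  -- pointwise key bound
  have key : ∀ β, ∀ s : ℝ, 0 < s →
      π₀ β s * L₀ β s ^ δ ≤ P * (s ^ (-a) * Real.exp (-(c β) / s)) := by
    intro β s hs
    rw [hπ₀, hL₀]
    have hQβ : (β - betaHat0) ⬝ᵥ M.mulVec (β - betaHat0) = Q β := by
      simp only [hQdef]
    rw [hQβ]
    have h2π : (0:ℝ) < 2 * π := by positivity
    have h2πs : (0:ℝ) < 2 * π * s := by positivity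
    have hrpow : ((2 * π * s) ^ (-(n₀:ℝ)/2) * Real.exp (-(S₀ + Q β) / (2*s))) ^ δ
        = (2*π) ^ w * s ^ w * Real.exp (-(S₀ + Q β) / (2*s) * δ) := by
      rw [Real.mul_rpow (Real.rpow_nonneg h2πs.le _) (Real.exp_pos _).le,
          ← Real.rpow_mul h2πs.le, ← Real.exp_mul, ← hw,
          Real.mul_rpow h2π.le hs.le]
    have hE2δ : -(S₀ + Q β) / (2*s) * δ = -(c β) / s := by
      simp only [hcdef]
      field_simp
    have hE1 : Real.exp (-(b + k / 2 * ((β - μ₀) ⬝ᵥ R.mulVec (β - μ₀))) / s) ≤ 1 := by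
      rw [Real.exp_le_one_iff]
      have hQR : 0 ≤ (β - μ₀) ⬝ᵥ R.mulVec (β - μ₀) := by
        have := hR.posSemidef.dotProduct_mulVec_nonneg (β - μ₀)
        simpa using this
      have hk0 : 0 ≤ k := by rcases hk with h | h <;> rw [h] <;> norm_num
      have hnum : 0 ≤ b + k/2 * ((β - μ₀) ⬝ᵥ R.mulVec (β - μ₀)) := by positivity
      exact div_nonpos_of_nonpos_of_nonneg (neg_nonpos.mpr hnum) hs.le
    have hspow : s ^ (-t) * s ^ w = s ^ (-a) := by
      rw [← Real.rpow_add hs]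
      congr 1
      rw [hw, ha]; ring
    have hLHS : s ^ (-t) * Real.exp (-(b + k / 2 * ((β - μ₀) ⬝ᵥ R.mulVec (β - μ₀))) / s) *
        ((2 * π * s) ^ (-(n₀:ℝ)/2) * Real.exp (-(S₀ + Q β) / (2*s))) ^ δ
        = P * s ^ (-a) *
          (Real.exp (-(b + k / 2 * ((β - μ₀) ⬝ᵥ R.mulVec (β - μ₀))) / s) *
            Real.exp (-(c β) / s)) := by
      rw [hrpow, hE2δ, ← hP, ← hspow]; ring
    rw [hLHS]
    have h0 : 0 ≤ P * s ^ (-a) * Real.exp (-(c β)/s) :=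
      mul_nonneg (mul_nonneg hPpos.le (Real.rpow_nonneg hs.le _)) (Real.exp_nonneg _)
    have h5 := mul_le_mul_of_nonneg_left hE1 h0
    linarith [h5]
  -- bounds on s^(-a) * exp(-c/s)
  have hB : ∀ β, ∀ s : ℝ, 0 < s →
      (s ^ (-a) * Real.exp (-(c β)/s) ≤ Ka * (c β) ^ (-a)) ∧
      (s ^ (-a) * Real.exp (-(c β)/s) ≤ Kr * (c β) ^ (-r) * s ^ (r - a)) := by
    intro β s hs
    have hcb := hcpos β
    have hdiv : ∀ q : ℝ, (c β / s) ^ (-q) = (c β) ^ (-q) * s ^ q := by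
      intro q
      rw [Real.div_rpow hcb.le hs.le, Real.rpow_neg hs.le, div_eq_mul_inv, inv_inv]
    have hexp : ∀ q : ℝ, 0 < q →
        Real.exp (-(c β)/s) ≤ (q ^ q * Real.exp (-q)) * ((c β)^(-q) * s ^ q) := by
      intro q hq
      rw [neg_div]
      calc Real.exp (-(c β / s)) ≤ q ^ q * Real.exp (-q) * (c β / s) ^ (-q) :=
            exp_neg_le_rpow hq (div_pos hcb hs)
        _ = (q ^ q * Real.exp (-q)) * ((c β)^(-q) * s^q) := by rw [hdiv q]
    constructor
    · have h1 := hexp a ha0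
      have h3 : s ^ (-a) * s ^ a = 1 := by
        rw [← Real.rpow_add hs]; simp
      calc s^(-a) * Real.exp (-(c β)/s)
          ≤ s^(-a) * ((a ^ a * Real.exp (-a)) * ((c β)^(-a) * s^a)) :=
            mul_le_mul_of_nonneg_left h1 (Real.rpow_nonneg hs.le _)
        _ = (a ^ a * Real.exp (-a)) * (c β)^(-a) * (s^(-a) * s^a) := by ring
        _ = Ka * (c β)^(-a) := by rw [h3, mul_one, hKa]
    · have h1 := hexp r hr0
      have h3 : s ^ (-a) * s ^ r = s ^ (r - a) := by
        rw [← Real.rpow_add hs]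
        congr 1
        ring
      calc s^(-a) * Real.exp (-(c β)/s)
          ≤ s^(-a) * ((r ^ r * Real.exp (-r)) * ((c β)^(-r) * s^r)) :=
            mul_le_mul_of_nonneg_left h1 (Real.rpow_nonneg hs.le _)
        _ = (r ^ r * Real.exp (-r)) * (c β)^(-r) * (s^(-a) * s^r) := by ring
        _ = Kr * (c β)^(-r) * s^(r-a) := by rw [h3, hKr]
  set J : ℝ≥0∞ := ∫⁻ s in Set.Ioi (1:ℝ), ENNReal.ofReal (s ^ (r - a)) with hJdef
  have hJ : J < ⊤ := by
    have hint : IntegrableOn (fun s : ℝ => s ^ (r - a)) (Set.Ioi 1) :=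
      integrableOn_Ioi_rpow_of_lt (by linarith) zero_lt_one
    exact hint.lintegral_lt_top
  have hdisj : Disjoint (Set.Ioc (0:ℝ) 1) (Set.Ioi 1) := by
    rw [Set.disjoint_left]
    rintro x ⟨_, hx1⟩ hx2
    rw [Set.mem_Ioi] at hx2
    exact absurd hx2 (not_lt.mpr hx1)
  have inner : ∀ β, (∫⁻ s in Set.Ioi (0:ℝ), ENNReal.ofReal (π₀ β s * L₀ β s ^ δ)) ≤
      ENNReal.ofReal ((P * Ka) * (c β) ^ (-a)) +
        ENNReal.ofReal ((P * Kr) * (c β) ^ (-r)) * J := by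
    intro β
    rw [← Set.Ioc_union_Ioi_eq_Ioi (zero_le_one (α := ℝ)),
        lintegral_union measurableSet_Ioi hdisj]
    apply add_le_add
    · calc ∫⁻ s in Set.Ioc (0:ℝ) 1, ENNReal.ofReal (π₀ β s * L₀ β s ^ δ)
          ≤ ∫⁻ _ in Set.Ioc (0:ℝ) 1, ENNReal.ofReal ((P * Ka) * (c β)^(-a)) := by
            apply lintegral_mono_ae
            rw [ae_restrict_iff' measurableSet_Ioc]
            filter_upwards with s hs
            apply ENNReal.ofReal_le_ofReal
            calc π₀ β s * L₀ β s ^ δ ≤ P * (s^(-a) * Real.exp (-(c β)/s)) := key β s hs.1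
              _ ≤ P * (Ka * (c β)^(-a)) :=
                  mul_le_mul_of_nonneg_left ((hB β s hs.1).1) hPpos.le
              _ = (P * Ka) * (c β)^(-a) := by ring
        _ = ENNReal.ofReal ((P * Ka) * (c β)^(-a)) := by
            rw [setLIntegral_const, Real.volume_Ioc]
            norm_num
    · calc ∫⁻ s in Set.Ioi (1:ℝ), ENNReal.ofReal (π₀ β s * L₀ β s ^ δ)
          ≤ ∫⁻ s in Set.Ioi (1:ℝ),
              ENNReal.ofReal ((P * Kr) * (c β)^(-r)) * ENNReal.ofReal (s ^ (r-a)) := by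
            apply lintegral_mono_ae
            rw [ae_restrict_iff' measurableSet_Ioi]
            filter_upwards with s hs
            rw [Set.mem_Ioi] at hs
            have hs0 : (0:ℝ) < s := lt_trans zero_lt_one hs
            rw [← ENNReal.ofReal_mul (mul_nonneg (mul_nonneg hPpos.le hKr0.le) (Real.rpow_nonneg (hcpos β).le _))]
            apply ENNReal.ofReal_le_ofReal
            calc π₀ β s * L₀ β s ^ δ ≤ P * (s^(-a) * Real.exp (-(c β)/s)) := key β s hs0
              _ ≤ P * (Kr * (c β)^(-r) * s^(r-a)) :=
                  mul_le_mul_of_nonneg_left ((hB β s hs0).2) hPpos.le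
              _ = ((P * Kr) * (c β)^(-r)) * s^(r-a) := by ring
        _ = ENNReal.ofReal ((P * Kr) * (c β)^(-r)) * J := by
            rw [lintegral_const_mul' _ _ ENNReal.ofReal_ne_top, hJdef]
  have hεpos : 0 < δ * min S₀ c₀ / 4 :=
    div_pos (mul_pos hδ0 (lt_min hS₀pos hc₀)) (by norm_num)
  have hlow : ∀ β, (δ * min S₀ c₀ / 4) * (1 + ‖β - betaHat0‖) ^ (2:ℝ) ≤ c β := by
    intro β
    have hq := hquad (β - betaHat0)
    have hQβ : (β - betaHat0) ⬝ᵥ M.mulVec (β - betaHat0) = Q β := by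
      simp only [hQdef]
    rw [hQβ] at hq
    have hn0 : 0 ≤ ‖β - betaHat0‖ := norm_nonneg _
    have hmin1 : min S₀ c₀ ≤ S₀ := min_le_left _ _
    have hmin2 : min S₀ c₀ ≤ c₀ := min_le_right _ _
    have hminpos : 0 < min S₀ c₀ := lt_min hS₀pos hc₀
    simp only [hcdef]
    set n := ‖β - betaHat0‖ with hn
    have hsq : (1+n) ^ (2:ℝ) = (1+n)^(2:ℕ) := by
      rw [← Real.rpow_natCast]; norm_num
    rw [hsq]
    have h1 : min S₀ c₀ * (1+n)^2 ≤ 2 * (S₀ + c₀ * n^2) := by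
      nlinarith [mul_nonneg hminpos.le (sq_nonneg (n-1))]
    nlinarith [mul_le_mul_of_nonneg_left h1 (by positivity : (0:ℝ) ≤ δ/4),
      mul_le_mul_of_nonneg_left hq hδ0.le]
  have fin : ∀ q Cq : ℝ, (p:ℝ) < 2*q → 0 ≤ Cq →
      ∫⁻ β, ENNReal.ofReal (Cq * (c β) ^ (-q)) < ⊤ := by
    intro q Cq hq hCq
    have heq : ∀ β, ENNReal.ofReal (Cq * (c β)^(-q)) =
        ENNReal.ofReal Cq * ENNReal.ofReal ((c β)^(-q)) :=
      fun β => ENNReal.ofReal_mul hCq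
    simp_rw [heq]
    rw [lintegral_const_mul' _ _ ENNReal.ofReal_ne_top]
    exact ENNReal.mul_lt_top ENNReal.ofReal_lt_top
      (lintegral_rpow_neg_finite c hccont betaHat0 _ q hεpos hq hlow)
  have hmeas1 : Measurable fun β => ENNReal.ofReal ((P * Ka) * (c β)^(-a)) := by
    apply Measurable.ennreal_ofReal
    exact ((hccont.rpow_const (fun β => Or.inl (hcpos β).ne')).measurable).const_mul _
  calc ∫⁻ β : Fin p → ℝ, ∫⁻ s in Set.Ioi (0:ℝ), ENNReal.ofReal (π₀ β s * L₀ β s ^ δ)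
      ≤ ∫⁻ β, (ENNReal.ofReal ((P * Ka) * (c β)^(-a)) +
          ENNReal.ofReal ((P * Kr) * (c β)^(-r)) * J) := lintegral_mono inner
    _ = (∫⁻ β, ENNReal.ofReal ((P * Ka) * (c β)^(-a))) +
        ∫⁻ β, ENNReal.ofReal ((P * Kr) * (c β)^(-r)) * J := lintegral_add_left hmeas1 _
    _ = (∫⁻ β, ENNReal.ofReal ((P * Ka) * (c β)^(-a))) +
        (∫⁻ β, ENNReal.ofReal ((P * Kr) * (c β)^(-r))) * J := by
          rw [lintegral_mul_const' J _ hJ.ne]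
    _ < ⊤ := by
        apply ENNReal.add_lt_top.mpr
        constructor
        · exact fin a (P * Ka) (by linarith) (mul_nonneg hPpos.le hKa0.le)
        · exact ENNReal.mul_lt_top
            (fin r (P * Kr) (by linarith) (mul_nonneg hPpos.le hKr0.le)) hJ
end

section
/- In the normal linear model setup with the reference initial prior π₀(β,σ²) = 1/σ², for every δ with p/n₀ < δ ≤ 1 the normalizing constant has the closed form C(δ) = ∫_{ℝ^p} ∫₀^∞ (1/σ²) L₀(β,σ²)^δ dσ² dβ = (2π)^{−(n₀δ−p)/2} · Γ((n₀δ−p)/2) · det(δX₀ᵀX₀)^{−1/2} · (δS₀/2)^{−(n₀δ−p)/2}. -/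
open MeasureTheory Matrix Real

lemma lint_gauss_iso {p : ℕ} {c : ℝ} (hc : 0 < c) :
    ∫⁻ u : Fin p → ℝ, ENNReal.ofReal (Real.exp (-(c * (u ⬝ᵥ u)))) =
      ENNReal.ofReal ((Real.pi / c) ^ ((p : ℝ) / 2)) := by
  have h1 : ∀ u : Fin p → ℝ, Real.exp (-(c * (u ⬝ᵥ u))) =
      ∏ i, Real.exp (-(c * (u i) ^ 2)) := by
    intro u
    rw [← Real.exp_sum]
    congr 1
    simp [dotProduct, Finset.mul_sum, sq]
  simp_rw [h1]
  have hint : Integrable (fun u : Fin p → ℝ => ∏ i, Real.exp (-(c * (u i) ^ 2))) := by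
    exact Integrable.fintype_prod (f := fun _ x => Real.exp (-(c * x ^ 2))) (fun i => by simpa [neg_mul] using integrable_exp_neg_mul_sq hc)
  rw [← ofReal_integral_eq_lintegral_ofReal hint]
  · rw [MeasureTheory.volume_pi, MeasureTheory.integral_fintype_prod_eq_pow (ι := Fin p) (fun x => Real.exp (-(c * x ^ 2)))]
    congr 1
    have : ∫ x : ℝ, Real.exp (-(c * x ^ 2)) = Real.sqrt (Real.pi / c) := by
      simpa [neg_mul] using integral_gaussian c
    rw [this, Real.sqrt_eq_rpow, Fintype.card_fin, ← Real.rpow_natCast ((Real.pi / c) ^ ((1:ℝ)/2)) p,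
      ← Real.rpow_mul (by positivity)]
    congr 1; ring
  · exact Filter.Eventually.of_forall fun u => Finset.prod_nonneg fun i _ => (Real.exp_pos _).le

open scoped MatrixOrder in
lemma lint_gauss_matrix {p : ℕ} (A : Matrix (Fin p) (Fin p) ℝ) (hA : A.PosDef) {c : ℝ}
    (hc : 0 < c) :
    ∫⁻ v : Fin p → ℝ, ENNReal.ofReal (Real.exp (-(c * (v ⬝ᵥ A.mulVec v)))) =
      ENNReal.ofReal ((Real.pi / c) ^ ((p : ℝ) / 2) * A.det ^ (-(1 : ℝ) / 2)) := by
  classical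
  set B := CFC.sqrt A with hBdef
  have hBB : B * B = A := CFC.sqrt_mul_sqrt_self A hA.posSemidef.nonneg
  have hBsymm : Bᵀ = B := by
    have := (CFC.sqrt_nonneg A).posSemidef.1
    rwa [Matrix.IsHermitian, Matrix.conjTranspose_eq_transpose_of_trivial] at this
  have hdetA : 0 < A.det := hA.det_pos
  have hdetB2 : B.det * B.det = A.det := by rw [← Matrix.det_mul, hBB]
  have hdetBne : B.det ≠ 0 := by
    intro h; rw [h, mul_zero] at hdetB2; exact hdetA.ne (by linarith)
  have habs : |B.det| = A.det ^ ((1 : ℝ) / 2) := by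
    rw [← Real.sqrt_eq_rpow, ← hdetB2, ← sq, Real.sqrt_sq_eq_abs]
  set f : (Fin p → ℝ) →ₗ[ℝ] (Fin p → ℝ) := Matrix.toLin' B with hfdef
  have hdetf : LinearMap.det f = B.det := LinearMap.det_toLin' B
  have hmap : Measure.map f volume = ENNReal.ofReal |(B.det)⁻¹| • volume := by
    have := MeasureTheory.Measure.map_linearMap_addHaar_pi_eq_smul_addHaar
      (f := f) (by rw [hdetf]; exact hdetBne) volume
    rwa [hdetf] at this
  have hfapply : ∀ v, f v = B.mulVec v := fun v => Matrix.toLin'_apply B v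
  have hquad : ∀ v : Fin p → ℝ, (f v) ⬝ᵥ (f v) = v ⬝ᵥ A.mulVec v := by
    intro v
    rw [hfapply]
    rw [Matrix.dotProduct_mulVec, ← Matrix.mulVec_transpose, hBsymm,
      Matrix.mulVec_mulVec, hBB, dotProduct_comm]
  have hg : Measurable fun u : Fin p → ℝ => ENNReal.ofReal (Real.exp (-(c * (u ⬝ᵥ u)))) := by
    apply ENNReal.measurable_ofReal.comp
    apply Measurable.comp Real.measurable_exp
    apply Measurable.neg
    apply Measurable.const_mul
    exact Finset.measurable_sum _ (fun i _ => ((measurable_pi_apply i).mul (measurable_pi_apply i)))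
  have hfmeas : Measurable f := f.continuous_of_finiteDimensional.measurable
  calc ∫⁻ v : Fin p → ℝ, ENNReal.ofReal (Real.exp (-(c * (v ⬝ᵥ A.mulVec v))))
      = ∫⁻ v : Fin p → ℝ, ENNReal.ofReal (Real.exp (-(c * ((f v) ⬝ᵥ (f v))))) := by
        simp_rw [hquad]
    _ = ∫⁻ u, ENNReal.ofReal (Real.exp (-(c * (u ⬝ᵥ u)))) ∂(Measure.map f volume) :=
        (MeasureTheory.lintegral_map hg hfmeas).symm
    _ = ENNReal.ofReal |(B.det)⁻¹| * ∫⁻ u, ENNReal.ofReal (Real.exp (-(c * (u ⬝ᵥ u)))) := by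
        rw [hmap, MeasureTheory.lintegral_smul_measure, smul_eq_mul]
    _ = ENNReal.ofReal ((Real.pi / c) ^ ((p : ℝ) / 2) * A.det ^ (-(1 : ℝ) / 2)) := by
        rw [lint_gauss_iso hc, ← ENNReal.ofReal_mul (abs_nonneg _)]
        congr 1
        rw [abs_inv, habs, mul_comm]
        rw [neg_div, Real.rpow_neg hdetA.le]

lemma lint_inv_gamma {b c₀ : ℝ} (hb : 0 < b) (hc : 0 < c₀) :
    ∫⁻ s in Set.Ioi (0 : ℝ), ENNReal.ofReal (s ^ (-b - 1) * Real.exp (-(c₀ * s⁻¹))) =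
      ENNReal.ofReal (c₀ ^ (-b) * Real.Gamma b) := by
  set g : ℝ → ℝ := fun y => y ^ (b - 1) * Real.exp (-c₀ * y) with hgdef
  have hgint : IntegrableOn g (Set.Ioi 0) := by
    have := integrableOn_rpow_mul_exp_neg_mul_rpow (p := 1) (s := b - 1) (b := c₀)
      (by linarith) one_pos hc
    simpa [hgdef] using this
  have heq : ∀ x ∈ Set.Ioi (0 : ℝ),
      x ^ (-b - 1) * Real.exp (-(c₀ * x⁻¹)) =
        (|(-1 : ℝ)| * x ^ ((-1 : ℝ) - 1)) • g (x ^ (-1 : ℝ)) := by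
    intro x hx
    have hx0 : 0 < x := hx
    rw [hgdef]
    simp only [smul_eq_mul, abs_neg, abs_one, one_mul, Real.rpow_neg_one]
    rw [Real.inv_rpow hx0.le, ← Real.rpow_neg hx0.le]
    rw [show (-1 : ℝ) - 1 = -2 by norm_num]
    rw [← mul_assoc, ← Real.rpow_add hx0]
    ring_nf
  have hIOn : IntegrableOn (fun x => (|(-1 : ℝ)| * x ^ ((-1 : ℝ) - 1)) • g (x ^ (-1 : ℝ)))
      (Set.Ioi 0) :=
    (integrableOn_Ioi_comp_rpow_iff g (by norm_num : (-1 : ℝ) ≠ 0)).2 hgint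
  calc ∫⁻ s in Set.Ioi (0 : ℝ), ENNReal.ofReal (s ^ (-b - 1) * Real.exp (-(c₀ * s⁻¹)))
      = ∫⁻ s in Set.Ioi (0 : ℝ),
          ENNReal.ofReal ((|(-1 : ℝ)| * s ^ ((-1 : ℝ) - 1)) • g (s ^ (-1 : ℝ))) := by
        apply setLIntegral_congr_fun measurableSet_Ioi
        exact fun x hx => by rw [heq x hx]
    _ = ENNReal.ofReal (∫ s in Set.Ioi (0 : ℝ), (|(-1 : ℝ)| * s ^ ((-1 : ℝ) - 1)) • g (s ^ (-1 : ℝ))) := by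
        rw [ofReal_integral_eq_lintegral_ofReal hIOn]
        apply (ae_restrict_iff' measurableSet_Ioi).2
        exact Filter.Eventually.of_forall fun x hx => by
          have hx0 : 0 < x := hx
          have : 0 ≤ g (x ^ (-1 : ℝ)) := by
            apply mul_nonneg (Real.rpow_nonneg (Real.rpow_nonneg hx0.le _) _) (Real.exp_pos _).le
          positivity
    _ = ENNReal.ofReal (∫ y in Set.Ioi (0 : ℝ), g y) := by
        rw [integral_comp_rpow_Ioi g (by norm_num : (-1 : ℝ) ≠ 0)]
    _ = ENNReal.ofReal (c₀ ^ (-b) * Real.Gamma b) := by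
        congr 1
        have := integral_rpow_mul_exp_neg_mul_rpow (p := 1) (q := b - 1) (b := c₀)
          one_pos (by linarith) hc
        simp only [Real.rpow_one, hgdef] at this ⊢
        rw [this]
        norm_num

/-- Normal linear model with the reference initial prior `π₀(β,σ²) = 1/σ²`: for every
`δ` with `p/n₀ < δ ≤ 1`,
`C(δ) = ∫∫ (1/σ²) L₀^δ
      = (2π)^{-(n₀δ-p)/2} Γ((n₀δ-p)/2) det(δX₀ᵀX₀)^{-1/2} (δS₀/2)^{-(n₀δ-p)/2}`. -/
theorem reference_prior_normalizing_constant_closed_form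
    (p n₀ : ℕ) (hp : 0 < p) (hpn : p < n₀)
    (X₀ : Matrix (Fin n₀) (Fin p) ℝ) (Y₀ : Fin n₀ → ℝ)
    (hX₀ : (X₀ᵀ * X₀).PosDef)
    (betaHat0 : Fin p → ℝ)
    (hbetaHat0 : betaHat0 = (X₀ᵀ * X₀)⁻¹.mulVec (X₀ᵀ.mulVec Y₀))
    (S₀ : ℝ)
    (hS₀ : S₀ = (Y₀ - X₀.mulVec betaHat0) ⬝ᵥ (Y₀ - X₀.mulVec betaHat0))
    (hS₀pos : 0 < S₀)
    (L₀ : (Fin p → ℝ) → ℝ → ℝ)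
    (hL₀ : ∀ β s, L₀ β s =
      (2 * Real.pi * s) ^ (-(n₀ : ℝ) / 2) *
        Real.exp (-(S₀ + (β - betaHat0) ⬝ᵥ (X₀ᵀ * X₀).mulVec (β - betaHat0)) / (2 * s)))
    (δ : ℝ) (hδ₁ : (p : ℝ) / (n₀ : ℝ) < δ) (hδ₂ : δ ≤ 1) :
    ∫⁻ β : Fin p → ℝ, ∫⁻ s in Set.Ioi (0 : ℝ),
        ENNReal.ofReal (s⁻¹ * L₀ β s ^ δ)
      = ENNReal.ofReal ((2 * Real.pi) ^ (-((n₀ : ℝ) * δ - p) / 2) *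
          Real.Gamma (((n₀ : ℝ) * δ - p) / 2) *
          (δ • (X₀ᵀ * X₀)).det ^ (-(1 : ℝ) / 2) *
          (δ * S₀ / 2) ^ (-((n₀ : ℝ) * δ - p) / 2)) := by
  classical
  have hn₀ : (0:ℝ) < n₀ := by exact_mod_cast hp.trans hpn
  have hδpos : 0 < δ := lt_of_le_of_lt (by positivity) hδ₁
  have hnp : (p:ℝ) < (n₀:ℝ) * δ := by rw [div_lt_iff₀ hn₀] at hδ₁; linarith
  set A := X₀ᵀ * X₀ with hAdef
  have hdetA : 0 < A.det := hX₀.det_pos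
  set q : (Fin p → ℝ) → ℝ := fun β => (β - betaHat0) ⬝ᵥ A.mulVec (β - betaHat0) with hqdef
  have hqcont : Continuous q := by
    have hg : Continuous fun β : Fin p → ℝ => β - betaHat0 := continuous_id.sub continuous_const
    have hqe : q = fun β => ∑ i, (β - betaHat0) i * ∑ j, A i j * (β - betaHat0) j := by
      funext β; simp [hqdef, dotProduct, Matrix.mulVec]
    rw [hqe]
    apply continuous_finset_sum; intro i _
    exact ((continuous_apply i).comp hg).mul
      (continuous_finset_sum _ fun j _ => continuous_const.mul ((continuous_apply j).comp hg))
  set b := ((n₀:ℝ) * δ - (p:ℝ)) / 2 with hbdef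
  have hb : 0 < b := by rw [hbdef]; linarith
  set c₀ := δ * S₀ / 2 with hc₀def
  have hc₀ : 0 < c₀ := by rw [hc₀def]; positivity
  set G : ℝ → ℝ := fun s =>
    s⁻¹ * (2 * Real.pi * s) ^ (-((n₀:ℝ) * δ) / 2) * Real.exp (-(δ * S₀) / (2 * s)) with hGdef
  have hGnn : ∀ s : ℝ, 0 < s → 0 ≤ G s := by
    intro s hs
    have h2 : (0:ℝ) < 2 * Real.pi * s := by positivity
    rw [hGdef]
    positivity
  -- pointwise rewrite of the integrand
  have key : ∀ (β : Fin p → ℝ) (s : ℝ), s ∈ Set.Ioi (0:ℝ) →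
      s⁻¹ * L₀ β s ^ δ = G s * Real.exp (-(δ / (2 * s) * q β)) := by
    intro β s hs
    have hs0 : (0:ℝ) < s := hs
    have h2πs : (0:ℝ) < 2 * Real.pi * s := by positivity
    rw [hL₀]
    rw [Real.mul_rpow (Real.rpow_nonneg h2πs.le _) (Real.exp_pos _).le]
    rw [← Real.rpow_mul h2πs.le, ← Real.exp_mul]
    have harg : -(S₀ + q β) / (2 * s) * δ =
        -(δ * S₀) / (2 * s) + -(δ / (2 * s) * q β) := by field_simp; ring
    rw [harg, Real.exp_add]
    have hexp : -(n₀:ℝ) / 2 * δ = -((n₀:ℝ) * δ) / 2 := by ring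
    rw [hexp, hGdef]
    ring
  -- measurability of the integrand on the product space
  have hmeasfun : Measurable (fun z : (Fin p → ℝ) × ℝ =>
      ENNReal.ofReal (z.2⁻¹ * L₀ z.1 z.2 ^ δ)) := by
    have hrw : (fun z : (Fin p → ℝ) × ℝ => ENNReal.ofReal (z.2⁻¹ * L₀ z.1 z.2 ^ δ)) =
        fun z => ENNReal.ofReal (z.2⁻¹ *
          ((2 * Real.pi * z.2) ^ (-(n₀:ℝ) / 2) *
            Real.exp (-(S₀ + q z.1) / (2 * z.2))) ^ δ) := by
      funext z; rw [hL₀]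
    rw [hrw]
    have hqm : Measurable q := hqcont.measurable
    fun_prop
  -- swap the two integrals
  rw [show (∫⁻ β : Fin p → ℝ, ∫⁻ s in Set.Ioi (0:ℝ), ENNReal.ofReal (s⁻¹ * L₀ β s ^ δ)) =
      ∫⁻ s in Set.Ioi (0:ℝ), ∫⁻ β : Fin p → ℝ, ENNReal.ofReal (s⁻¹ * L₀ β s ^ δ) from
    lintegral_lintegral_swap hmeasfun.aemeasurable]
  -- inner Gaussian integral
  have inner : ∀ s ∈ Set.Ioi (0:ℝ),
      (∫⁻ β : Fin p → ℝ, ENNReal.ofReal (s⁻¹ * L₀ β s ^ δ))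
        = ENNReal.ofReal (G s) *
          ENNReal.ofReal ((Real.pi / (δ / (2 * s))) ^ ((p:ℝ) / 2) * A.det ^ (-(1:ℝ) / 2)) := by
    intro s hs
    have hs0 : (0:ℝ) < s := hs
    have hc : 0 < δ / (2 * s) := by positivity
    have hmb : Measurable fun β : Fin p → ℝ =>
        ENNReal.ofReal (Real.exp (-(δ / (2 * s) * q β))) :=
      (ENNReal.continuous_ofReal.comp
        (Real.continuous_exp.comp ((continuous_const.mul hqcont).neg))).measurable
    calc (∫⁻ β : Fin p → ℝ, ENNReal.ofReal (s⁻¹ * L₀ β s ^ δ))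
        = ∫⁻ β : Fin p → ℝ, ENNReal.ofReal (G s) *
            ENNReal.ofReal (Real.exp (-(δ / (2 * s) * q β))) := by
          apply lintegral_congr; intro β
          rw [key β s hs, ENNReal.ofReal_mul (hGnn s hs0)]
      _ = ENNReal.ofReal (G s) *
            ∫⁻ β : Fin p → ℝ, ENNReal.ofReal (Real.exp (-(δ / (2 * s) * q β))) :=
          lintegral_const_mul _ hmb
      _ = ENNReal.ofReal (G s) *
            ∫⁻ v : Fin p → ℝ,
              ENNReal.ofReal (Real.exp (-(δ / (2 * s) * (v ⬝ᵥ A.mulVec v)))) := by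
          congr 1
          have := lintegral_sub_right_eq_self (μ := (volume : Measure (Fin p → ℝ)))
            (f := fun v : Fin p → ℝ =>
              ENNReal.ofReal (Real.exp (-(δ / (2 * s) * (v ⬝ᵥ A.mulVec v))))) betaHat0
          rw [← this]
      _ = ENNReal.ofReal (G s) *
            ENNReal.ofReal ((Real.pi / (δ / (2 * s))) ^ ((p:ℝ) / 2) * A.det ^ (-(1:ℝ) / 2)) := by
          rw [lint_gauss_matrix A hX₀ hc]
  rw [setLIntegral_congr_fun measurableSet_Ioi inner]
  -- the constant K
  set K := (2 * Real.pi) ^ (-((n₀:ℝ) * δ) / 2) * Real.pi ^ ((p:ℝ) / 2) *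
      (δ / 2) ^ (-((p:ℝ) / 2)) * A.det ^ (-(1:ℝ) / 2) with hKdef
  have hKnn : 0 ≤ K := by
    rw [hKdef]; positivity
  -- pointwise identity for the outer integrand
  have outerkey : ∀ s ∈ Set.Ioi (0:ℝ),
      ENNReal.ofReal (G s) *
          ENNReal.ofReal ((Real.pi / (δ / (2 * s))) ^ ((p:ℝ) / 2) * A.det ^ (-(1:ℝ) / 2))
        = ENNReal.ofReal K * ENNReal.ofReal (s ^ (-b - 1) * Real.exp (-(c₀ * s⁻¹))) := by
    intro s hs
    have hs0 : (0:ℝ) < s := hs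
    rw [← ENNReal.ofReal_mul (hGnn s hs0), ← ENNReal.ofReal_mul hKnn]
    congr 1
    have e1 : (Real.pi / (δ / (2 * s))) ^ ((p:ℝ) / 2) =
        Real.pi ^ ((p:ℝ) / 2) * ((δ / 2) ^ (-((p:ℝ) / 2)) * s ^ ((p:ℝ) / 2)) := by
      have e0 : Real.pi / (δ / (2 * s)) = Real.pi * ((δ / 2)⁻¹ * s) := by
        field_simp
      rw [e0, Real.mul_rpow Real.pi_pos.le (by positivity),
        Real.mul_rpow (by positivity) hs0.le, Real.inv_rpow (by positivity),
        ← Real.rpow_neg (by positivity)]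
    have e2 : (2 * Real.pi * s) ^ (-((n₀:ℝ) * δ) / 2) =
        (2 * Real.pi) ^ (-((n₀:ℝ) * δ) / 2) * s ^ (-((n₀:ℝ) * δ) / 2) :=
      Real.mul_rpow (by positivity) hs0.le
    have e3 : Real.exp (-(δ * S₀) / (2 * s)) = Real.exp (-(c₀ * s⁻¹)) := by
      congr 1; rw [hc₀def]; field_simp
    have e4 : s⁻¹ * s ^ (-((n₀:ℝ) * δ) / 2) * s ^ ((p:ℝ) / 2) = s ^ (-b - 1) := by
      rw [← Real.rpow_neg_one s, ← Real.rpow_add hs0, ← Real.rpow_add hs0]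
      congr 1; rw [hbdef]; ring
    rw [hGdef]
    simp only []
    rw [e1, e2, e3, ← e4, hKdef]
    ring
  rw [setLIntegral_congr_fun measurableSet_Ioi outerkey]
  -- outer integral
  have hms : Measurable fun s : ℝ => ENNReal.ofReal (s ^ (-b - 1) * Real.exp (-(c₀ * s⁻¹))) := by
    apply Measurable.ennreal_ofReal
    fun_prop
  rw [lintegral_const_mul _ hms, lint_inv_gamma hb hc₀]
  -- final constant computation
  rw [← ENNReal.ofReal_mul hKnn]
  congr 1
  have hdet : (δ • A).det = δ ^ p * A.det := by
    rw [Matrix.det_smul, Fintype.card_fin]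
  have hexp1 : -((n₀:ℝ) * δ - (p:ℝ)) / 2 = -b := by rw [hbdef]; ring
  have hexp2 : ((n₀:ℝ) * δ - (p:ℝ)) / 2 = b := by rw [hbdef]
  rw [hdet, hexp1]
  have hK2 : K = (2 * Real.pi) ^ (-b) * (δ ^ p * A.det) ^ (-(1:ℝ) / 2) := by
    rw [Real.mul_rpow (pow_nonneg hδpos.le p) hdetA.le]
    rw [← Real.rpow_natCast δ p, ← Real.rpow_mul hδpos.le]
    have h1 : ((2:ℝ) * Real.pi) ^ (-((n₀:ℝ) * δ) / 2) =
        (2 * Real.pi) ^ (-b) * (2 * Real.pi) ^ (-((p:ℝ) / 2)) := by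
      rw [← Real.rpow_add (by positivity)]
      congr 1; rw [hbdef]; ring
    have h2 : ((2:ℝ) * Real.pi) ^ (-((p:ℝ) / 2)) * Real.pi ^ ((p:ℝ) / 2) *
        (δ / 2) ^ (-((p:ℝ) / 2)) = δ ^ ((p:ℝ) * (-(1:ℝ) / 2)) := by
      have hh2 : (p:ℝ) * (-(1:ℝ) / 2) = -((p:ℝ) / 2) := by ring
      rw [hh2]
      rw [Real.rpow_neg (by positivity : (0:ℝ) ≤ 2 * Real.pi),
        ← Real.inv_rpow (by positivity : (0:ℝ) ≤ 2 * Real.pi),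
        Real.rpow_neg (by positivity : (0:ℝ) ≤ δ / 2),
        ← Real.inv_rpow (by positivity : (0:ℝ) ≤ δ / 2),
        Real.rpow_neg hδpos.le, ← Real.inv_rpow hδpos.le,
        ← Real.mul_rpow (by positivity) Real.pi_pos.le,
        ← Real.mul_rpow (by positivity) (by positivity)]
      congr 1
      field_simp
    rw [hKdef, h1, ← h2]
    ring
  rw [hK2]
  ring
end

section
/- Consider the one-dimensional normal model: for an integer n₀ ≥ 2, sample mean ȳ₀ ∈ ℝ and residual sum of squares S₀ > 0, let L₀(μ,σ²) = (2πσ²)^{−n₀/2} exp(−(S₀ + n₀(μ − ȳ₀)²)/(2σ²)), and take the improper reference prior π₀(μ,σ²) = 1/σ². Then the full posterior is proper, ∫_ℝ ∫₀^∞ (1/σ²) L₀(μ,σ²) dσ² dμ < ∞, yet for every δ with 0 < δ ≤ 1/n₀ the powered integral ∫_ℝ ∫₀^∞ (1/σ²) L₀(μ,σ²)^δ dσ² dμ is infinite. Thus propriety of the posterior under the full likelihood does not imply propriety of the power prior for all δ ∈ (0,1]. -/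
open MeasureTheory Real

open MeasureTheory Real Set

lemma intOn_gammaAux {p r : ℝ} (hp : 0 < p) (hr : 0 < r) :
    IntegrableOn (fun y : ℝ => y ^ (p - 1) * Real.exp (-(r * y))) (Set.Ioi 0) := by
  have h := Real.GammaIntegral_convergent hp
  have h2 : IntegrableOn (fun y : ℝ => Real.exp (-(r * y)) * (r * y) ^ (p - 1)) (Set.Ioi 0) := by
    have := (integrableOn_Ioi_comp_mul_left_iff
      (fun x : ℝ => Real.exp (-x) * x ^ (p - 1)) 0 hr).2
    rw [mul_zero] at this
    exact this h
  refine IntegrableOn.congr_fun (h2.const_mul (r ^ (1 - p))) (fun y hy => ?_) measurableSet_Ioi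
  have hy0 : (0:ℝ) < y := hy
  rw [Real.mul_rpow hr.le hy0.le,
    show r ^ (1 - p) * (Real.exp (-(r * y)) * (r ^ (p - 1) * y ^ (p - 1)))
      = (r ^ (1 - p) * r ^ (p - 1)) * (y ^ (p - 1) * Real.exp (-(r * y))) from by ring,
    ← Real.rpow_add hr]
  norm_num

lemma image_inv_IoiAux : (fun x : ℝ => x⁻¹) '' (Set.Ioi 0) = Set.Ioi 0 := by
  ext y
  constructor
  · rintro ⟨x, hx, rfl⟩
    exact Set.mem_Ioi.2 (inv_pos.2 (Set.mem_Ioi.1 hx))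
  · intro hy
    exact ⟨y⁻¹, Set.mem_Ioi.2 (inv_pos.2 (Set.mem_Ioi.1 hy)), by simp⟩

lemma invGamma_ptwise {p r : ℝ} {x : ℝ} (hx : (0:ℝ) < x) :
    |(-(x ^ 2)⁻¹)| • ((x⁻¹) ^ (p - 1) * Real.exp (-(r * x⁻¹)))
      = x ^ (-p - 1) * Real.exp (-(r / x)) := by
  rw [smul_eq_mul, abs_neg, abs_inv, abs_of_pos (by positivity : (0:ℝ) < x ^ 2)]
  rw [Real.inv_rpow hx.le, ← Real.rpow_neg hx.le, ← div_eq_mul_inv]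
  have h2 : (x ^ 2)⁻¹ = x ^ (-2 : ℝ) := by
    rw [← Real.rpow_two, ← Real.rpow_neg hx.le]
  rw [h2, ← mul_assoc, ← Real.rpow_add hx]
  norm_num
  ring_nf

lemma invGamma_subst {p r : ℝ} (hp : 0 < p) (hr : 0 < r) :
    IntegrableOn (fun s : ℝ => s ^ (-p - 1) * Real.exp (-(r / s))) (Set.Ioi 0) ∧
      ∫ s in Set.Ioi (0:ℝ), s ^ (-p - 1) * Real.exp (-(r / s))
        = (1 / r) ^ p * Real.Gamma p := by
  have hf' : ∀ x ∈ Set.Ioi (0:ℝ),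
      HasDerivWithinAt (fun x : ℝ => x⁻¹) (-(x ^ 2)⁻¹) (Set.Ioi 0) x :=
    fun x hx => (hasDerivAt_inv (ne_of_gt hx)).hasDerivWithinAt
  have hinj : Set.InjOn (fun x : ℝ => x⁻¹) (Set.Ioi 0) :=
    fun a _ b _ h => inv_injective h
  have hiff := integrableOn_image_iff_integrableOn_abs_deriv_smul measurableSet_Ioi hf' hinj
    (fun y : ℝ => y ^ (p - 1) * Real.exp (-(r * y)))
  rw [image_inv_IoiAux] at hiff
  have hval := integral_image_eq_integral_abs_deriv_smul measurableSet_Ioi hf' hinj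
    (fun y : ℝ => y ^ (p - 1) * Real.exp (-(r * y)))
  rw [image_inv_IoiAux] at hval
  constructor
  · refine IntegrableOn.congr_fun (hiff.1 (intOn_gammaAux hp hr)) (fun x hx => ?_)
      measurableSet_Ioi
    exact invGamma_ptwise hx
  · rw [← integral_rpow_mul_exp_neg_mul_Ioi hp hr, hval]
    exact setIntegral_congr_fun measurableSet_Ioi (fun x hx => (invGamma_ptwise hx).symm)

lemma lintegral_invGammaAux {p r : ℝ} (hp : 0 < p) (hr : 0 < r) :
    ∫⁻ s in Set.Ioi (0:ℝ), ENNReal.ofReal (s ^ (-p - 1) * Real.exp (-(r / s)))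
      = ENNReal.ofReal ((1 / r) ^ p * Real.Gamma p) := by
  obtain ⟨hint, hval⟩ := invGamma_subst hp hr
  rw [← hval, ← ofReal_integral_eq_lintegral_ofReal hint]
  refine (ae_restrict_iff' measurableSet_Ioi).2 (ae_of_all _ (fun x hx => ?_))
  have hx0 : (0:ℝ) < x := hx
  positivity

lemma lintegral_invGammaConstAux {p r C : ℝ} (hp : 0 < p) (hr : 0 < r) (hC : 0 ≤ C) :
    ∫⁻ s in Set.Ioi (0:ℝ), ENNReal.ofReal (C * (s ^ (-p - 1) * Real.exp (-(r / s))))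
      = ENNReal.ofReal (C * ((1 / r) ^ p * Real.Gamma p)) := by
  simp_rw [ENNReal.ofReal_mul hC]
  rw [lintegral_const_mul' _ _ ENNReal.ofReal_ne_top, lintegral_invGammaAux hp hr]

lemma integrand_eqAux {n A δ : ℝ} {s : ℝ} (hs : 0 < s) :
    s⁻¹ * ((2 * Real.pi * s) ^ (-n / 2) * Real.exp (-A / (2 * s))) ^ δ
      = (2 * Real.pi) ^ (-(n * δ) / 2)
          * (s ^ (-(n * δ / 2) - 1) * Real.exp (-(δ * A / 2 / s))) := by
  have h2πs : (0:ℝ) ≤ 2 * Real.pi * s := by positivity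
  rw [Real.mul_rpow (Real.rpow_nonneg h2πs _) (Real.exp_nonneg _),
    ← Real.rpow_mul h2πs, ← Real.exp_mul,
    Real.mul_rpow (by positivity : (0:ℝ) ≤ 2 * Real.pi) hs.le,
    show -A / (2 * s) * δ = -(δ * A / 2 / s) from by field_simp,
    show -n / 2 * δ = -(n * δ) / 2 from by ring,
    show s⁻¹ = s ^ (-1 : ℝ) from (Real.rpow_neg_one s).symm]
  rw [show s ^ (-1:ℝ) * ((2 * Real.pi) ^ (-(n * δ) / 2) * s ^ (-(n * δ) / 2)
        * Real.exp (-(δ * A / 2 / s)))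
      = (2 * Real.pi) ^ (-(n * δ) / 2) * ((s ^ (-1:ℝ) * s ^ (-(n * δ) / 2))
        * Real.exp (-(δ * A / 2 / s))) from by ring,
    ← Real.rpow_add hs, show (-1 : ℝ) + -(n * δ) / 2 = -(n * δ / 2) - 1 from by ring]

lemma innerAux {n A δ : ℝ} (hn : 0 < n) (hδ : 0 < δ) (hA : 0 < A) :
    ∫⁻ s in Set.Ioi (0:ℝ),
        ENNReal.ofReal (s⁻¹ * ((2 * Real.pi * s) ^ (-n / 2) * Real.exp (-A / (2 * s))) ^ δ)
      = ENNReal.ofReal ((2 * Real.pi) ^ (-(n * δ) / 2)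
          * ((1 / (δ * A / 2)) ^ (n * δ / 2) * Real.Gamma (n * δ / 2))) := by
  rw [setLIntegral_congr_fun measurableSet_Ioi
    (fun s (hs : s ∈ Set.Ioi (0:ℝ)) => congrArg ENNReal.ofReal (integrand_eqAux (Set.mem_Ioi.1 hs)))]
  exact lintegral_invGammaConstAux (by positivity) (by positivity)
    (Real.rpow_nonneg (by positivity) _)

set_option maxHeartbeats 2000000 in
/-- One-dimensional normal model with the improper reference prior `π₀(μ,σ²) = 1/σ²`:
the posterior under the full likelihood is proper, yet for every `δ ∈ (0, 1/n₀]` the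
powered integral `∫∫ (1/σ²) L₀^δ` is infinite. So propriety at `δ = 1` does not imply
propriety of the power prior for all `δ ∈ (0,1]`. -/
theorem reference_prior_powered_posterior_improper
    (n₀ : ℕ) (hn₀ : 2 ≤ n₀) (ybar₀ : ℝ) (S₀ : ℝ) (hS₀ : 0 < S₀)
    (L₀ : ℝ → ℝ → ℝ)
    (hL₀ : ∀ μ s, L₀ μ s =
      (2 * Real.pi * s) ^ (-(n₀ : ℝ) / 2) *
        Real.exp (-(S₀ + (n₀ : ℝ) * (μ - ybar₀) ^ 2) / (2 * s))) :
    (∫⁻ μ : ℝ, ∫⁻ s in Set.Ioi (0 : ℝ), ENNReal.ofReal (s⁻¹ * L₀ μ s)) < ⊤ ∧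
      ∀ δ : ℝ, 0 < δ → δ ≤ 1 / (n₀ : ℝ) →
        (∫⁻ μ : ℝ, ∫⁻ s in Set.Ioi (0 : ℝ), ENNReal.ofReal (s⁻¹ * L₀ μ s ^ δ)) = ⊤ := by
  have hn2 : (2:ℝ) ≤ (n₀:ℝ) := by exact_mod_cast hn₀
  have hn0 : (0:ℝ) < (n₀:ℝ) := by linarith
  have hA : ∀ μ : ℝ, 0 < S₀ + (n₀:ℝ) * (μ - ybar₀) ^ 2 := fun μ => by
    have := mul_nonneg hn0.le (sq_nonneg (μ - ybar₀)); linarith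
  constructor
  · -- Part 1 : propriety at δ = 1
    set q : ℝ := (n₀:ℝ) / 2 with hq
    have hq1 : 1 ≤ q := by rw [hq]; linarith
    have hq0 : 0 < q := by linarith
    have hΓ : 0 < Real.Gamma q := Real.Gamma_pos_of_pos hq0
    have key1 : ∀ μ : ℝ, (∫⁻ s in Set.Ioi (0:ℝ), ENNReal.ofReal (s⁻¹ * L₀ μ s))
        = ENNReal.ofReal ((2 * Real.pi) ^ (-(n₀:ℝ) / 2)
            * ((2 / (S₀ + (n₀:ℝ) * (μ - ybar₀) ^ 2)) ^ q * Real.Gamma q)) := by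
      intro μ
      have h := innerAux (n := (n₀:ℝ)) (A := S₀ + (n₀:ℝ) * (μ - ybar₀) ^ 2)
        hn0 one_pos (hA μ)
      simp only [mul_one, one_mul] at h
      rw [one_div_div] at h
      rw [← h]
      refine setLIntegral_congr_fun measurableSet_Ioi (fun s hs => ?_)
      rw [hL₀ μ s, Real.rpow_one]
    set c : ℝ := min S₀ 1 with hc
    have hc0 : 0 < c := lt_min hS₀ one_pos
    set K : ℝ := (2 * Real.pi) ^ (-(n₀:ℝ) / 2) * Real.Gamma q * (2 / c) ^ q with hK
    have hbound : ∀ μ : ℝ,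
        (2 * Real.pi) ^ (-(n₀:ℝ) / 2)
            * ((2 / (S₀ + (n₀:ℝ) * (μ - ybar₀) ^ 2)) ^ q * Real.Gamma q)
          ≤ K * (1 + (μ - ybar₀) ^ 2)⁻¹ := by
      intro μ
      set x : ℝ := μ - ybar₀
      set A : ℝ := S₀ + (n₀:ℝ) * x ^ 2 with hAdef
      have hA0 : 0 < A := hA μ
      have hx1 : (0:ℝ) < 1 + x ^ 2 := by positivity
      have hAc : c * (1 + x ^ 2) ≤ A := by
        have h1 : c ≤ S₀ := min_le_left _ _
        have h2 : c ≤ 1 := min_le_right _ _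
        have h3 : c * x ^ 2 ≤ (n₀:ℝ) * x ^ 2 :=
          mul_le_mul_of_nonneg_right (by linarith) (sq_nonneg x)
        have : c * (1 + x ^ 2) = c + c * x ^ 2 := by ring
        rw [this, hAdef]; linarith
      have hmain : (2 / A) ^ q ≤ (2 / c) ^ q * (1 + x ^ 2)⁻¹ := by
        have hstep1 : (2 / A) ^ q ≤ (2 / (c * (1 + x ^ 2))) ^ q := by
          refine Real.rpow_le_rpow (by positivity) ?_ hq0.le
          rw [div_le_div_iff₀ hA0 (by positivity)]
          nlinarith
        have heq : (2 / (c * (1 + x ^ 2))) ^ q = (2 / c) ^ q * ((1 + x ^ 2)⁻¹) ^ q := by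
          rw [← Real.mul_rpow (by positivity) (by positivity)]
          congr 1
          field_simp
        have hstep2 : ((1 + x ^ 2)⁻¹) ^ q ≤ (1 + x ^ 2)⁻¹ := by
          rw [Real.inv_rpow hx1.le, ← Real.rpow_neg hx1.le,
            ← Real.rpow_neg_one (1 + x ^ 2)]
          exact Real.rpow_le_rpow_of_exponent_le (by nlinarith [sq_nonneg x]) (by linarith)
        calc (2 / A) ^ q ≤ (2 / c) ^ q * ((1 + x ^ 2)⁻¹) ^ q := by rw [← heq]; exact hstep1
          _ ≤ (2 / c) ^ q * (1 + x ^ 2)⁻¹ :=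
            mul_le_mul_of_nonneg_left hstep2 (Real.rpow_nonneg (by positivity) _)
      calc (2 * Real.pi) ^ (-(n₀:ℝ) / 2) * ((2 / A) ^ q * Real.Gamma q)
          ≤ (2 * Real.pi) ^ (-(n₀:ℝ) / 2)
              * (((2 / c) ^ q * (1 + x ^ 2)⁻¹) * Real.Gamma q) :=
            mul_le_mul_of_nonneg_left (mul_le_mul_of_nonneg_right hmain hΓ.le)
              (Real.rpow_nonneg (by positivity) _)
        _ = K * (1 + x ^ 2)⁻¹ := by rw [hK]; ring
    have hKpos : 0 < K := by
      refine mul_pos (mul_pos (Real.rpow_pos_of_pos (by positivity) _) hΓ) ?_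
      exact Real.rpow_pos_of_pos (by positivity) _
    have hintK : Integrable (fun μ : ℝ => K * (1 + (μ - ybar₀) ^ 2)⁻¹) :=
      (integrable_inv_one_add_sq.comp_sub_right ybar₀).const_mul K
    calc (∫⁻ μ : ℝ, ∫⁻ s in Set.Ioi (0:ℝ), ENNReal.ofReal (s⁻¹ * L₀ μ s))
        = ∫⁻ μ : ℝ, ENNReal.ofReal ((2 * Real.pi) ^ (-(n₀:ℝ) / 2)
            * ((2 / (S₀ + (n₀:ℝ) * (μ - ybar₀) ^ 2)) ^ q * Real.Gamma q)) :=
          lintegral_congr key1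
      _ ≤ ∫⁻ μ : ℝ, ENNReal.ofReal (K * (1 + (μ - ybar₀) ^ 2)⁻¹) :=
          lintegral_mono fun μ => ENNReal.ofReal_le_ofReal (hbound μ)
      _ < ⊤ := by
          rw [lt_top_iff_ne_top,
            lintegral_ofReal_ne_top_iff_integrable hintK.aestronglyMeasurable
              (ae_of_all _ fun μ => by positivity)]
          exact hintK
  · -- Part 2 : impropriety for 0 < δ ≤ 1/n₀
    intro δ hδ hδn
    set q' : ℝ := (n₀:ℝ) * δ / 2 with hq'
    have hnδ1 : (n₀:ℝ) * δ ≤ 1 := by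
      have := mul_le_mul_of_nonneg_left hδn hn0.le
      rwa [mul_one_div, div_self hn0.ne'] at this
    have hq'0 : 0 < q' := by rw [hq']; positivity
    have hΓ' : 0 < Real.Gamma q' := Real.Gamma_pos_of_pos hq'0
    have key2 : ∀ μ : ℝ, (∫⁻ s in Set.Ioi (0:ℝ), ENNReal.ofReal (s⁻¹ * L₀ μ s ^ δ))
        = ENNReal.ofReal ((2 * Real.pi) ^ (-((n₀:ℝ) * δ) / 2)
            * ((2 / (δ * (S₀ + (n₀:ℝ) * (μ - ybar₀) ^ 2))) ^ q' * Real.Gamma q')) := by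
      intro μ
      have h := innerAux (n := (n₀:ℝ)) (A := S₀ + (n₀:ℝ) * (μ - ybar₀) ^ 2)
        hn0 hδ (hA μ)
      rw [one_div_div] at h
      rw [← h]
      refine setLIntegral_congr_fun measurableSet_Ioi (fun s hs => ?_)
      rw [hL₀ μ s]
    simp_rw [key2]
    set C : ℝ := (2 * Real.pi) ^ (-((n₀:ℝ) * δ) / 2) with hC
    have hC0 : 0 < C := Real.rpow_pos_of_pos (by positivity) _
    set g₂ : ℝ → ℝ := fun μ => C
        * ((2 / (δ * (S₀ + (n₀:ℝ) * (μ - ybar₀) ^ 2))) ^ q' * Real.Gamma q') with hg₂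
    by_contra hne
    have hg₂nonneg : ∀ μ, 0 ≤ g₂ μ := fun μ =>
      mul_nonneg hC0.le (mul_nonneg (Real.rpow_nonneg
        (div_nonneg (by norm_num) (mul_pos hδ (hA μ)).le) _) hΓ'.le)
    have hcont : Continuous g₂ := by
      have hAcont : Continuous (fun μ : ℝ => δ * (S₀ + (n₀:ℝ) * (μ - ybar₀) ^ 2)) := by
        continuity
      have h1 : Continuous (fun μ : ℝ => 2 / (δ * (S₀ + (n₀:ℝ) * (μ - ybar₀) ^ 2))) :=
        continuous_const.div hAcont (fun μ => (mul_pos hδ (hA μ)).ne')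
      exact continuous_const.mul ((h1.rpow_const (fun μ => Or.inr hq'0.le)).mul
        continuous_const)
    have hint2 : Integrable g₂ := by
      rw [← lintegral_ofReal_ne_top_iff_integrable hcont.aestronglyMeasurable
        (ae_of_all _ hg₂nonneg)]
      exact hne
    set a : ℝ := |ybar₀| + 1 with ha
    set B : ℝ := 2 / (δ * (S₀ + 4 * (n₀:ℝ))) with hB
    have hSn : 0 < S₀ + 4 * (n₀:ℝ) := by linarith
    have hBpos : 0 < B := by rw [hB]; positivity
    set c₂ : ℝ := C * Real.Gamma q' * B ^ q' with hc₂
    have hc₂pos : 0 < c₂ :=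
      mul_pos (mul_pos hC0 hΓ') (Real.rpow_pos_of_pos hBpos _)
    have hlow : ∀ μ : ℝ, μ ∈ Set.Ioi a → c₂ * μ⁻¹ ≤ g₂ μ := by
      intro μ hμ
      have hμa : a < μ := hμ
      have hμ1 : (1:ℝ) < μ := by
        have : (0:ℝ) ≤ |ybar₀| := abs_nonneg _
        rw [ha] at hμa; linarith
      have hμ0 : (0:ℝ) < μ := by linarith
      set A : ℝ := S₀ + (n₀:ℝ) * (μ - ybar₀) ^ 2 with hAdef
      have hA0 : 0 < A := hA μ
      have hxb : μ - ybar₀ ≤ 2 * μ := by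
        have : -|ybar₀| ≤ ybar₀ := neg_abs_le _
        rw [ha] at hμa; linarith
      have hxpos : 0 < μ - ybar₀ := by
        have : ybar₀ ≤ |ybar₀| := le_abs_self _
        rw [ha] at hμa; linarith
      have hAle : A ≤ (S₀ + 4 * (n₀:ℝ)) * μ ^ 2 := by
        have h1 : (μ - ybar₀) ^ 2 ≤ 4 * μ ^ 2 := by nlinarith
        have h2 : S₀ ≤ S₀ * μ ^ 2 := by nlinarith [sq_nonneg (μ - 1), mul_pos hS₀ hμ0]
        rw [hAdef]; nlinarith
      have hstep1 : (2 / (δ * ((S₀ + 4 * (n₀:ℝ)) * μ ^ 2))) ^ q'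
          ≤ (2 / (δ * A)) ^ q' := by
        refine Real.rpow_le_rpow (by positivity) ?_ hq'0.le
        rw [div_le_div_iff₀ (by positivity) (by positivity)]
        nlinarith [mul_le_mul_of_nonneg_left hAle hδ.le]
      have heq : (2 / (δ * ((S₀ + 4 * (n₀:ℝ)) * μ ^ 2))) ^ q'
          = B ^ q' * ((μ ^ 2)⁻¹) ^ q' := by
        rw [← Real.mul_rpow hBpos.le (by positivity)]
        congr 1
        rw [hB]; field_simp
      have hstep2 : μ⁻¹ ≤ ((μ ^ 2)⁻¹) ^ q' := by
        rw [Real.inv_rpow (by positivity), ← Real.rpow_neg (by positivity),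
          ← Real.rpow_two, ← Real.rpow_mul hμ0.le,
          ← Real.rpow_neg_one μ]
        refine Real.rpow_le_rpow_of_exponent_le hμ1.le ?_
        rw [hq']; nlinarith
      have hmain : B ^ q' * μ⁻¹ ≤ (2 / (δ * A)) ^ q' := by
        calc B ^ q' * μ⁻¹ ≤ B ^ q' * ((μ ^ 2)⁻¹) ^ q' :=
              mul_le_mul_of_nonneg_left hstep2 (Real.rpow_nonneg hBpos.le _)
          _ = (2 / (δ * ((S₀ + 4 * (n₀:ℝ)) * μ ^ 2))) ^ q' := heq.symm
          _ ≤ (2 / (δ * A)) ^ q' := hstep1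
      calc c₂ * μ⁻¹ = C * ((B ^ q' * μ⁻¹) * Real.Gamma q') := by rw [hc₂]; ring
        _ ≤ C * ((2 / (δ * A)) ^ q' * Real.Gamma q') :=
            mul_le_mul_of_nonneg_left (mul_le_mul_of_nonneg_right hmain hΓ'.le) hC0.le
        _ = g₂ μ := by rw [hg₂]
    have hintOn : IntegrableOn (fun μ : ℝ => c₂ * μ⁻¹) (Set.Ioi a) := by
      refine Integrable.mono' (hint2.integrableOn) ?_ ?_
      · exact ((measurable_inv.const_mul c₂).aestronglyMeasurable)
      · refine (ae_restrict_iff' measurableSet_Ioi).2 (ae_of_all _ fun μ hμ => ?_)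
        have hμ0 : (0:ℝ) < μ := by
          have : (0:ℝ) ≤ |ybar₀| := abs_nonneg _
          have hμa : a < μ := hμ
          rw [ha] at hμa; linarith
        rw [Real.norm_eq_abs, abs_of_nonneg (by positivity)]
        exact hlow μ hμ
    have hinv : IntegrableOn (fun μ : ℝ => μ⁻¹) (Set.Ioi a) := by
      refine IntegrableOn.congr_fun (hintOn.const_mul c₂⁻¹) (fun μ _ => ?_)
        measurableSet_Ioi
      field_simp
    exact not_IntegrableOn_Ioi_inv hinv
end
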